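/- arXiv:2209.12312 — 5 statements merged into one kernel-verified Lean document; each statement's English description precedes it below -/
import Mathlib

section
/- Let Σ ⊂ ℝ³ be a smooth embedded surface, U ⊂ Σ an open set, and u, w smooth vector fields on U tangent to Σ such that: (i) u(p) ≠ 0, w(p) ≠ 0 and g_p(u, w) = 0 for every p ∈ U, where g is the metric induced on Σ by the Euclidean metric; (ii) the Lie bracket [u, w] vanishes on U; (iii) u and w are locally gradients on U, i.e., for each p ∈ U there are a neighborhood V ⊂ U and smooth functions α, β : V → ℝ with g(u, ·) = dα and g(w, ·) = dβ on V. Then the Gauss curvature of Σ vanishes at every point of U. -/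
noncomputable section

open MeasureTheory Filter Set
open scoped RealInnerProductSpace Topology

abbrev E3 : Type := EuclideanSpace ℝ (Fin 3)
abbrev E2 : Type := EuclideanSpace ℝ (Fin 2)

def mk3 (a b c : ℝ) : E3 := (EuclideanSpace.equiv (Fin 3) ℝ).symm ![a, b, c]

def e3 (i : Fin 3) : E3 := EuclideanSpace.single i 1

/-- `∂_j v_i` at `p`. -/
def pder (v : E3 → E3) (i j : Fin 3) (p : E3) : ℝ := fderiv ℝ v p (e3 j) i

def div3 (v : E3 → E3) (p : E3) : ℝ := ∑ i, pder v i i p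

def curl3 (v : E3 → E3) (p : E3) : E3 :=
  mk3 (pder v 2 1 p - pder v 1 2 p) (pder v 0 2 p - pder v 2 0 p)
    (pder v 1 0 p - pder v 0 1 p)

def lap3 (f : E3 → ℝ) (p : E3) : ℝ :=
  ∑ j, fderiv ℝ (fun x => fderiv ℝ f x (e3 j)) p (e3 j)

def IsTangentAt (S : Set E3) (p v : E3) : Prop :=
  ∃ γ : ℝ → E3, (∀ t, γ t ∈ S) ∧ γ 0 = p ∧ HasDerivAt γ v 0

def IsSurface (k : ℕ∞) (S : Set E3) : Prop :=
  ∀ p ∈ S, ∃ (f : E2 → E3) (U : Set E2) (V : Set E3),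
    IsOpen U ∧ IsOpen V ∧ p ∈ V ∧ ContDiffOn ℝ k f U ∧ Set.InjOn f U ∧
    f '' U = S ∩ V ∧ ∀ x ∈ U, Function.Injective (fderiv ℝ f x)

structure CVSBase (S Ωm Ωp : Set E3) (vm vp : E3 → E3) : Prop where
  openm : IsOpen Ωm
  openp : IsOpen Ωp
  disj : Disjoint Ωm Ωp
  disjm : Disjoint Ωm S
  disjp : Disjoint Ωp S
  clm : S ⊆ closure Ωm
  clp : S ⊆ closure Ωp
  smoothm : ∃ W, IsOpen W ∧ Ωm ∪ S ⊆ W ∧ ContDiffOn ℝ 1 vm W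
  smoothp : ∃ W, IsOpen W ∧ Ωp ∪ S ⊆ W ∧ ContDiffOn ℝ 1 vp W
  divm : ∀ p ∈ Ωm, div3 vm p = 0
  divp : ∀ p ∈ Ωp, div3 vp p = 0
  curlm : ∀ p ∈ Ωm, curl3 vm p = 0
  curlp : ∀ p ∈ Ωp, curl3 vp p = 0
  tangentm : ∀ p ∈ S, IsTangentAt S p (vm p)
  tangentp : ∀ p ∈ S, IsTangentAt S p (vp p)

structure CVSPair (S Ωm Ωp : Set E3) (vm vp : E3 → E3)
    extends CVSBase S Ωm Ωp vm vp : Prop where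
  strain : ∀ p ∈ S, (fderiv ℝ vp p + fderiv ℝ vm p) (vp p - vm p) = 0
  bernoulli : ∀ p ∈ S, ∀ᶠ q in 𝓝[S] p,
    ‖vp q‖ ^ 2 - ‖vm q‖ ^ 2 = ‖vp p‖ ^ 2 - ‖vm p‖ ^ 2

/-- the open region `Ωm` is the bounded region enclosed by the closed surface `S`,
and `Ωp` is its exterior. -/
structure EnclosedBy (S Ωm Ωp : Set E3) : Prop where
  openm : IsOpen Ωm
  bounded : Bornology.IsBounded Ωm
  fr : frontier Ωm = S
  plus : Ωp = (Ωm ∪ S)ᶜ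


section Statement8Helpers

lemma coe_le_inf (m : ℕ∞) : ((m:ℕ∞):WithTop ℕ∞) ≤ ((⊤:ℕ∞):WithTop ℕ∞) :=
  WithTop.coe_le_coe.2 le_top

lemma two_le_inf : (1:WithTop ℕ∞) + 1 ≤ ((⊤:ℕ∞):WithTop ℕ∞) := by
  rw [show ((1:WithTop ℕ∞) + 1) = (((2:ℕ∞)):WithTop ℕ∞) by norm_cast]
  exact coe_le_inf 2

/-- The derivative of a function vanishing on a relatively open subset of `S`,
along a tangent direction, is zero. -/
lemma tangent_deriv_zero (S O' : Set E3) (hO' : IsOpen O') {φ : E3 → ℝ} {p τ : E3}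
    (hp2 : p ∈ O') (hφ : DifferentiableAt ℝ φ p)
    (h0 : ∀ x ∈ S ∩ O', φ x = 0)
    (ht : IsTangentAt S p τ) : fderiv ℝ φ p τ = 0 := by
  obtain ⟨γ, hγS, hγ0, hγ'⟩ := ht
  have hcont : ContinuousAt γ 0 := hγ'.continuousAt
  have hev : ∀ᶠ t in 𝓝 (0:ℝ), γ t ∈ O' := hcont (hO'.mem_nhds (hγ0 ▸ hp2))
  have hev0 : (fun t => φ (γ t)) =ᶠ[𝓝 (0:ℝ)] fun _ => (0:ℝ) := by
    filter_upwards [hev] with t htO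
    exact h0 _ ⟨hγS t, htO⟩
  have hfd : HasFDerivAt φ (fderiv ℝ φ p) (γ 0) := hγ0 ▸ hφ.hasFDerivAt
  have hd : HasDerivAt (fun t => φ (γ t)) (fderiv ℝ φ p τ) 0 := hfd.comp_hasDerivAt 0 hγ'
  have hd0 : HasDerivAt (fun t => φ (γ t)) 0 0 :=
    (hasDerivAt_const (0:ℝ) (0:ℝ)).congr_of_eventuallyEq hev0
  exact hd.unique hd0

/-- Images of vectors under the differential of a chart are tangent vectors. -/
lemma chart_tangent {S : Set E3} {f : E2 → E3} {U₂ : Set E2} (hU₂ : IsOpen U₂)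
    (hf : ContDiffOn ℝ ((⊤:ℕ∞):WithTop ℕ∞) f U₂) (hfS : ∀ x ∈ U₂, f x ∈ S) {x : E2} (hx : x ∈ U₂)
    (v : E2) : IsTangentAt S (f x) (fderiv ℝ f x v) := by
  obtain ⟨ε, hε, hball⟩ := Metric.isOpen_iff.1 hU₂ x hx
  set c : ℝ := ε / (2 * (‖v‖ + 1)) with hc
  have hvpos : (0:ℝ) < ‖v‖ + 1 := by positivity
  have hcpos : 0 < c := by positivity
  set θ : ℝ → ℝ := fun t => c * Real.arctan (t / c) with hθ
  have hmem : ∀ t, x + θ t • v ∈ U₂ := by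
    intro t
    apply hball
    have h1 : |Real.arctan (t / c)| < Real.pi / 2 := by
      rw [abs_lt]
      exact ⟨Real.neg_pi_div_two_lt_arctan _, Real.arctan_lt_pi_div_two _⟩
    have h2 : ‖θ t • v‖ < ε := by
      rw [norm_smul]
      have : ‖θ t‖ = c * |Real.arctan (t / c)| := by
        rw [hθ]; simp [abs_mul, abs_of_pos hcpos, Real.norm_eq_abs]
      rw [this]
      calc c * |Real.arctan (t / c)| * ‖v‖ ≤ c * |Real.arctan (t / c)| * (‖v‖ + 1) := by
            apply mul_le_mul_of_nonneg_left (by linarith) (by positivity)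
        _ < c * 2 * (‖v‖ + 1) := by
            have hpi : Real.pi / 2 < 2 := by
              have := Real.pi_lt_d2; linarith
            have := mul_lt_mul_of_pos_left (lt_trans h1 hpi) hcpos
            nlinarith [abs_nonneg (Real.arctan (t/c))]
        _ = ε := by rw [hc]; field_simp
    simp only [Metric.mem_ball, dist_eq_norm]
    simpa using h2
  have hθ0 : θ 0 = 0 := by simp [hθ]
  have hθ' : HasDerivAt θ 1 0 := by
    have h1 : HasDerivAt (fun t : ℝ => t / c) (1 / c) 0 := by
      simpa using (hasDerivAt_id (0:ℝ)).div_const c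
    have h2 : HasDerivAt (fun t => Real.arctan (t / c))
        ((1 / (1 + ((0:ℝ)/c) ^ 2)) * (1 / c)) 0 :=
      by have := (Real.hasDerivAt_arctan ((0:ℝ)/c)).comp 0 h1; exact this
    have h3 := h2.const_mul c
    refine h3.congr_deriv (Eq.symm ?_)
    simp [hcpos.ne']
  set γ : ℝ → E3 := fun t => f (x + θ t • v) with hγ
  refine ⟨γ, fun t => hfS _ (hmem t), by simp [hγ, hθ0], ?_⟩
  have hinner : HasDerivAt (fun t => x + θ t • v) v 0 := by
    have := (hθ'.smul_const v).const_add x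
    simpa using this
  have hdf : DifferentiableAt ℝ f x :=
    (hf.contDiffAt (hU₂.mem_nhds hx)).differentiableAt (by simp)
  have hfd : HasFDerivAt f (fderiv ℝ f x) ((fun t => x + θ t • v) 0) := by
    rw [show (fun t => x + θ t • v) 0 = x by simp [hθ0]]
    exact hdf.hasFDerivAt
  exact hfd.comp_hasDerivAt 0 hinner

private lemma nrm1 {x : E3} (hx : x ≠ 0) : ⟪‖x‖⁻¹ • x, ‖x‖⁻¹ • x⟫ = 1 := by
  have h := norm_ne_zero_iff.2 hx
  rw [real_inner_smul_left, real_inner_smul_right, real_inner_self_eq_norm_mul_norm]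
  field_simp

private lemma nrm0 {x y : E3} (h : ⟪x, y⟫ = 0) : ⟪‖x‖⁻¹ • x, ‖y‖⁻¹ • y⟫ = 0 := by
  rw [real_inner_smul_left, real_inner_smul_right, h]; ring

lemma ortho_zero {a b c v : E3} (ha : a ≠ 0) (hb : b ≠ 0) (hc : c ≠ 0)
    (hab : ⟪a, b⟫ = 0) (hac : ⟪a, c⟫ = 0) (hbc : ⟪b, c⟫ = 0)
    (hva : ⟪v, a⟫ = 0) (hvb : ⟪v, b⟫ = 0) (hvc : ⟪v, c⟫ = 0) : v = 0 := by
  have hba : ⟪b, a⟫ = 0 := by rw [real_inner_comm]; exact hab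
  have hca : ⟪c, a⟫ = 0 := by rw [real_inner_comm]; exact hac
  have hcb : ⟪c, b⟫ = 0 := by rw [real_inner_comm]; exact hbc
  set g : Fin 3 → E3 := ![‖a‖⁻¹ • a, ‖b‖⁻¹ • b, ‖c‖⁻¹ • c] with hg
  have e1 : ⟪‖a‖⁻¹ • a, ‖a‖⁻¹ • a⟫ = 1 := nrm1 ha
  have e2 : ⟪‖b‖⁻¹ • b, ‖b‖⁻¹ • b⟫ = 1 := nrm1 hb
  have e3' : ⟪‖c‖⁻¹ • c, ‖c‖⁻¹ • c⟫ = 1 := nrm1 hc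
  have e4 : ⟪‖a‖⁻¹ • a, ‖b‖⁻¹ • b⟫ = 0 := nrm0 hab
  have e5 : ⟪‖a‖⁻¹ • a, ‖c‖⁻¹ • c⟫ = 0 := nrm0 hac
  have e6 : ⟪‖b‖⁻¹ • b, ‖c‖⁻¹ • c⟫ = 0 := nrm0 hbc
  have e7 : ⟪‖b‖⁻¹ • b, ‖a‖⁻¹ • a⟫ = 0 := nrm0 hba
  have e8 : ⟪‖c‖⁻¹ • c, ‖a‖⁻¹ • a⟫ = 0 := nrm0 hca
  have e9 : ⟪‖c‖⁻¹ • c, ‖b‖⁻¹ • b⟫ = 0 := nrm0 hcb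
  have hON : Orthonormal ℝ g := by
    rw [orthonormal_iff_ite]
    intro i j
    fin_cases i <;> fin_cases j <;>
      simp only [hg, Fin.reduceFinMk, Matrix.cons_val_zero, Matrix.cons_val_one,
        Matrix.cons_val_two, Matrix.tail_cons, Matrix.head_cons, Fin.reduceEq,
        reduceIte, Fin.mk_zero, Fin.mk_one, e1, e2, e3', e4, e5, e6, e7, e8, e9,
        Fin.zero_eta, Fin.isValue]
  have hspan : Submodule.span ℝ (Set.range g) = ⊤ := by
    have hli := hON.linearIndependent
    apply LinearIndependent.span_eq_top_of_card_eq_finrank hli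
    simp [finrank_euclideanSpace]
  have f1 : ⟪‖a‖⁻¹ • a, v⟫ = 0 := by
    rw [real_inner_smul_left, real_inner_comm, hva]; ring
  have f2 : ⟪‖b‖⁻¹ • b, v⟫ = 0 := by
    rw [real_inner_smul_left, real_inner_comm, hvb]; ring
  have f3 : ⟪‖c‖⁻¹ • c, v⟫ = 0 := by
    rw [real_inner_smul_left, real_inner_comm, hvc]; ring
  have hle : Submodule.span ℝ (Set.range g) ≤ (ℝ ∙ v)ᗮ := by
    rw [Submodule.span_le]
    rintro _ ⟨i, rfl⟩
    rw [SetLike.mem_coe, Submodule.mem_orthogonal_singleton_iff_inner_right]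
    rw [real_inner_comm]
    fin_cases i <;>
      simp only [hg, Fin.reduceFinMk, Matrix.cons_val_zero, Matrix.cons_val_one,
        Matrix.cons_val_two, Matrix.tail_cons, Matrix.head_cons, Fin.mk_zero, Fin.mk_one,
        Fin.zero_eta, Fin.isValue, f1, f2, f3]
  have hv : v ∈ (ℝ ∙ v)ᗮ := by
    rw [hspan] at hle
    exact hle trivial
  have h0 : ⟪v, v⟫ = 0 := hv v (Submodule.mem_span_singleton_self v)
  exact inner_self_eq_zero.1 h0

lemma inner_expand {a b c : E3} (ha : a ≠ 0) (hb : b ≠ 0) (hc : c ≠ 0)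
    (hab : ⟪a, b⟫ = 0) (hac : ⟪a, c⟫ = 0) (hbc : ⟪b, c⟫ = 0) (v₁ v₂ : E3) :
    ⟪v₁, v₂⟫ = ⟪v₁, a⟫ * ⟪v₂, a⟫ / ⟪a, a⟫ + ⟪v₁, b⟫ * ⟪v₂, b⟫ / ⟪b, b⟫
      + ⟪v₁, c⟫ * ⟪v₂, c⟫ / ⟪c, c⟫ := by
  have haa : ⟪a, a⟫ ≠ 0 := fun h => ha (inner_self_eq_zero.1 h)
  have hbb : ⟪b, b⟫ ≠ 0 := fun h => hb (inner_self_eq_zero.1 h)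
  have hcc : ⟪c, c⟫ ≠ 0 := fun h => hc (inner_self_eq_zero.1 h)
  have hba : ⟪b, a⟫ = 0 := by rw [real_inner_comm]; exact hab
  have hca : ⟪c, a⟫ = 0 := by rw [real_inner_comm]; exact hac
  have hcb : ⟪c, b⟫ = 0 := by rw [real_inner_comm]; exact hbc
  set d : E3 := v₂ - (⟪v₂, a⟫ / ⟪a, a⟫) • a - (⟪v₂, b⟫ / ⟪b, b⟫) • b
      - (⟪v₂, c⟫ / ⟪c, c⟫) • c with hd
  have hda : ⟪d, a⟫ = 0 := by
    rw [hd, inner_sub_left, inner_sub_left, inner_sub_left, real_inner_smul_left,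
      real_inner_smul_left, real_inner_smul_left, hba, hca, div_mul_cancel₀ _ haa]
    ring
  have hdb : ⟪d, b⟫ = 0 := by
    rw [hd, inner_sub_left, inner_sub_left, inner_sub_left, real_inner_smul_left,
      real_inner_smul_left, real_inner_smul_left, hab, hcb, div_mul_cancel₀ _ hbb]
    ring
  have hdc : ⟪d, c⟫ = 0 := by
    rw [hd, inner_sub_left, inner_sub_left, inner_sub_left, real_inner_smul_left,
      real_inner_smul_left, real_inner_smul_left, hac, hbc, div_mul_cancel₀ _ hcc]
    ring
  have hd0 : d = 0 := ortho_zero ha hb hc hab hac hbc hda hdb hdc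
  have h0 : v₂ - ((⟪v₂, a⟫ / ⟪a, a⟫) • a + (⟪v₂, b⟫ / ⟪b, b⟫) • b
      + (⟪v₂, c⟫ / ⟪c, c⟫) • c) = 0 := by rw [← hd0, hd]; abel
  have hv₂ := sub_eq_zero.1 h0
  conv_lhs => rw [hv₂]
  rw [inner_add_right, inner_add_right, real_inner_smul_right, real_inner_smul_right,
    real_inner_smul_right]
  ring

lemma exists_good_chart {Sig : Set E3} (hSig : IsSurface ⊤ Sig) {p np : E3} (hp : p ∈ Sig)
    (hnp : np ≠ 0) (horth : ∀ τ, IsTangentAt Sig p τ → ⟪np, τ⟫ = 0) :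
    ∃ (f : E2 → E3) (U₂ : Set E2) (x₀ : E2), IsOpen U₂ ∧ x₀ ∈ U₂ ∧ f x₀ = p ∧
      ContDiffOn ℝ ((⊤:ℕ∞):WithTop ℕ∞) f U₂ ∧ (∀ x ∈ U₂, f x ∈ Sig) ∧
      (∀ x ∈ U₂, ∀ v : E2, IsTangentAt Sig (f x) (fderiv ℝ f x v)) ∧
      (∀ X : E3, ⟪np, X⟫ = 0 → ∃ v : E2, fderiv ℝ f x₀ v = X) := by
  obtain ⟨f, U₂, V, hU₂, hV, hpV, hf, hinj, himg, hdf⟩ := hSig p hp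
  have hpimg : p ∈ f '' U₂ := by rw [himg]; exact ⟨hp, hpV⟩
  obtain ⟨x₀, hx₀, hfx₀⟩ := hpimg
  have hfS : ∀ x ∈ U₂, f x ∈ Sig := fun x hx =>
    (himg.subset (Set.mem_image_of_mem f hx)).1
  have htang : ∀ x ∈ U₂, ∀ v, IsTangentAt Sig (f x) (fderiv ℝ f x v) :=
    fun x hx v => chart_tangent hU₂ hf hfS hx v
  refine ⟨f, U₂, x₀, hU₂, hx₀, hfx₀, hf, hfS, htang, ?_⟩
  set D : E2 →L[ℝ] E3 := fderiv ℝ f x₀ with hD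
  set T : Submodule ℝ E3 := LinearMap.range (D : E2 →ₗ[ℝ] E3) with hT
  have hTle : T ≤ (ℝ ∙ np)ᗮ := by
    rintro _ ⟨v, rfl⟩
    rw [Submodule.mem_orthogonal_singleton_iff_inner_right]
    exact horth _ (hfx₀ ▸ htang x₀ hx₀ v)
  have hrank : Module.finrank ℝ T = 2 := by
    rw [hT]
    rw [LinearMap.finrank_range_of_inj (f := (D : E2 →ₗ[ℝ] E3)) (hdf x₀ hx₀)]
    simp [finrank_euclideanSpace]
  have hrank2 : Module.finrank ℝ ((ℝ ∙ np)ᗮ : Submodule ℝ E3) = 2 := by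
    have h1 := Submodule.finrank_add_finrank_orthogonal (K := (ℝ ∙ np))
    rw [finrank_span_singleton hnp] at h1
    have h3 : Module.finrank ℝ E3 = 3 := by simp [finrank_euclideanSpace]
    omega
  have hTeq : T = (ℝ ∙ np)ᗮ :=
    Submodule.eq_of_le_of_finrank_eq hTle (by rw [hrank, hrank2])
  intro X hX
  have hXmem : X ∈ (ℝ ∙ np)ᗮ := Submodule.mem_orthogonal_singleton_iff_inner_right.2 hX
  rw [← hTeq] at hXmem
  obtain ⟨v, hv⟩ := hXmem
  exact ⟨v, hv⟩

lemma grad_symm {Sig U O' W : Set E3} {u n : E3 → E3}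
    (hSig : IsSurface ⊤ Sig) (hO' : IsOpen O') (hUdef : U = Sig ∩ O')
    (hW : IsOpen W) (hu : ContDiffOn ℝ (⊤ : ℕ∞) u W)
    (hn_orth : ∀ p ∈ U, ∀ v, IsTangentAt Sig p v → ⟪n p, v⟫ = 0)
    {p : E3} (hp : p ∈ U) (hpW : p ∈ W) (hnp0 : n p ≠ 0)
    {O : Set E3} {α : E3 → ℝ} (hO : IsOpen O) (hpO : p ∈ O)
    (hα : ContDiffOn ℝ 1 α O)
    (hgrad : ∀ q ∈ U ∩ O, ∀ τ : E3, IsTangentAt Sig q τ → fderiv ℝ α q τ = ⟪u q, τ⟫)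
    {X Y : E3} (hX : ⟪n p, X⟫ = 0) (hY : ⟪n p, Y⟫ = 0) :
    ⟪fderiv ℝ u p X, Y⟫ = ⟪fderiv ℝ u p Y, X⟫ := by
  have hpSig : p ∈ Sig := (hUdef ▸ hp).1
  have hpO' : p ∈ O' := (hUdef ▸ hp).2
  obtain ⟨f, U₂, x₀, hU₂, hx₀, hfx₀, hf, hfS, htang, hsurj⟩ :=
    exists_good_chart hSig hpSig hnp0 (hn_orth p hp)
  set Ω : Set E2 := U₂ ∩ f ⁻¹' (O ∩ O' ∩ W) with hΩdef
  have hΩ : IsOpen Ω :=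
    (hf.continuousOn).isOpen_inter_preimage hU₂ (hO.inter hO' |>.inter hW)
  have hx₀Ω : x₀ ∈ Ω := ⟨hx₀, by
    simp only [Set.mem_preimage]; rw [hfx₀]; exact ⟨⟨hpO, hpO'⟩, hpW⟩⟩
  have hΩU₂ : Ω ⊆ U₂ := Set.inter_subset_left
  have hfU : ∀ x ∈ Ω, f x ∈ U ∩ O := by
    intro x hx
    have h1 : f x ∈ O ∩ O' ∧ f x ∈ W := by
      have := hx.2; simp only [Set.mem_preimage, Set.mem_inter_iff] at this
      exact ⟨⟨this.1.1, this.1.2⟩, this.2⟩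
    exact ⟨hUdef ▸ ⟨hfS x (hΩU₂ hx), h1.1.2⟩, h1.1.1⟩
  have hf_diff : ∀ x ∈ U₂, HasFDerivAt f (fderiv ℝ f x) x := fun x hx =>
    ((hf.contDiffAt (hU₂.mem_nhds hx)).differentiableAt (by simp)).hasFDerivAt
  have hdf_cd : ContDiffOn ℝ 1 (fderiv ℝ f) U₂ := hf.fderiv_of_isOpen hU₂ two_le_inf
  have hdf_diff : DifferentiableAt ℝ (fderiv ℝ f) x₀ :=
    (hdf_cd.differentiableOn one_ne_zero).differentiableAt (hU₂.mem_nhds hx₀)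
  set g : E2 → (E2 →L[ℝ] ℝ) :=
    fun x => ((innerSL ℝ (u (f x))).comp (fderiv ℝ f x)) with hgdef
  have hag : ∀ x ∈ Ω, HasFDerivAt (α ∘ f) (g x) x := by
    intro x hx
    have hfx : f x ∈ U ∩ O := hfU x hx
    have hA : HasFDerivAt α (fderiv ℝ α (f x)) (f x) :=
      ((hα.contDiffAt (hO.mem_nhds hfx.2)).differentiableAt one_ne_zero).hasFDerivAt
    have hcomp := hA.comp x (hf_diff x (hΩU₂ hx))
    refine hcomp.congr_fderiv (Eq.symm ?_)
    refine ContinuousLinearMap.ext fun v => ?_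
    simp only [hgdef, ContinuousLinearMap.comp_apply, innerSL_apply_apply]
    exact (hgrad (f x) hfx _ (htang x (hΩU₂ hx) v)).symm
  have hf_diff₀ : DifferentiableAt ℝ f x₀ := (hf_diff x₀ hx₀).differentiableAt
  have hu_diff : DifferentiableAt ℝ u p :=
    (hu.contDiffAt (hW.mem_nhds hpW)).differentiableAt (by simp)
  have huf_diff : DifferentiableAt ℝ (fun x => u (f x)) x₀ := by
    have h := hu_diff
    rw [← hfx₀] at h
    exact h.comp x₀ hf_diff₀
  have hg_diff : DifferentiableAt ℝ g x₀ := by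
    have hc : DifferentiableAt ℝ (fun x => innerSL ℝ (u (f x))) x₀ := by
      have := ((innerSL ℝ : E3 →L[ℝ] E3 →L[ℝ] ℝ).differentiableAt
        (x := u (f x₀))).comp x₀ huf_diff
      exact this
    exact hc.clm_comp hdf_diff
  have hev : ∀ᶠ y in 𝓝 x₀, HasFDerivAt (α ∘ f) (g y) y := by
    filter_upwards [hΩ.mem_nhds hx₀Ω] with y hy using hag y hy
  have hsymm := second_derivative_symmetric_of_eventually hev hg_diff.hasFDerivAt
  have hevf : ∀ᶠ y in 𝓝 x₀, HasFDerivAt f (fderiv ℝ f y) y := by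
    filter_upwards [hU₂.mem_nhds hx₀] with y hy using hf_diff y hy
  have hfsymm := second_derivative_symmetric_of_eventually hevf hdf_diff.hasFDerivAt
  have hkey : ∀ v₁ v₂ : E2, (fderiv ℝ g x₀ v₁) v₂
      = ⟪u p, (fderiv ℝ (fderiv ℝ f) x₀ v₁) v₂⟫
        + ⟪fderiv ℝ u p (fderiv ℝ f x₀ v₁), fderiv ℝ f x₀ v₂⟫ := by
    intro v₁ v₂
    have h1 : HasFDerivAt (fun x => g x v₂)
        ((g x₀).comp (0 : E2 →L[ℝ] E2) + (fderiv ℝ g x₀).flip v₂) x₀ :=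
      hg_diff.hasFDerivAt.clm_apply (hasFDerivAt_const v₂ x₀)
    have h1' : fderiv ℝ (fun x => g x v₂) x₀ v₁ = (fderiv ℝ g x₀ v₁) v₂ := by
      rw [h1.fderiv]
      simp
    have h2 : (fun x => g x v₂) = fun x => ⟪u (f x), fderiv ℝ f x v₂⟫ := by
      funext x
      simp [hgdef]
    have hGf : DifferentiableAt ℝ (fun x => fderiv ℝ f x v₂) x₀ :=
      hdf_diff.clm_apply (differentiableAt_const v₂)
    have h3 := fderiv_inner_apply ℝ huf_diff hGf v₁
    have h4 : HasFDerivAt (fun x => fderiv ℝ f x v₂)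
        ((fderiv ℝ f x₀).comp (0 : E2 →L[ℝ] E2) + (fderiv ℝ (fderiv ℝ f) x₀).flip v₂) x₀ :=
      hdf_diff.hasFDerivAt.clm_apply (hasFDerivAt_const v₂ x₀)
    have h4' : fderiv ℝ (fun x => fderiv ℝ f x v₂) x₀ v₁
        = (fderiv ℝ (fderiv ℝ f) x₀ v₁) v₂ := by
      rw [h4.fderiv]
      simp
    have h5 : fderiv ℝ (fun x => u (f x)) x₀ v₁ = fderiv ℝ u p (fderiv ℝ f x₀ v₁) := by
      have h := hu_diff
      rw [← hfx₀] at h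
      have := fderiv_comp x₀ h hf_diff₀
      rw [show (fun x => u (f x)) = u ∘ f from rfl, this]
      simp [hfx₀]
    rw [← h1', h2, h3, h4', h5, hfx₀]
  have hmain : ∀ v₁ v₂ : E2, ⟪fderiv ℝ u p (fderiv ℝ f x₀ v₁), fderiv ℝ f x₀ v₂⟫
      = ⟪fderiv ℝ u p (fderiv ℝ f x₀ v₂), fderiv ℝ f x₀ v₁⟫ := by
    intro v₁ v₂
    have e1 := hkey v₁ v₂
    have e2 := hkey v₂ v₁
    have e3 := hsymm v₁ v₂
    have e4 := hfsymm v₁ v₂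
    rw [e1, e2, e4] at e3
    linarith
  obtain ⟨a, ha⟩ := hsurj X hX
  obtain ⟨b, hb⟩ := hsurj Y hY
  have := hmain a b
  rw [ha, hb] at this
  exact this

end Statement8Helpers

/-- Let `Σ ⊂ ℝ³` be a smooth embedded surface, `U ⊆ Σ` a relatively open
subset, and `u, w` smooth vector fields near `U`, tangent to `Σ`, such that:
(i) `u` and `w` are nonvanishing on `U` and pointwise orthogonal there (for the metric
induced by the Euclidean inner product); (ii) the Lie bracket `[u, w] = (Du)·w − (Dw)·u`
vanishes on `U`; (iii) `u` and `w` are locally gradients on `U` (locally there are functions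
`α, β` whose intrinsic differentials along `Σ` are `g(u, ·)` and `g(w, ·)`).  Then the Gauss
curvature of `Σ` vanishes at every point of `U`: at each `q ∈ U` the differential of the
Gauss map `n` kills some nonzero tangent vector. -/
theorem statement8
    (Sig U : Set E3) (u w : E3 → E3) (n : E3 → E3) (W Wn : Set E3)
    (hSig : IsSurface ⊤ Sig)
    (hUsub : U ⊆ Sig) (hUopen : ∃ O : Set E3, IsOpen O ∧ U = Sig ∩ O)
    -- `n` is a C¹ unit normal (Gauss map) near `U`
    (hWn : IsOpen Wn) (hUWn : U ⊆ Wn) (hn : ContDiffOn ℝ 1 n Wn)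
    (hn_unit : ∀ p ∈ U, ‖n p‖ = 1)
    (hn_orth : ∀ p ∈ U, ∀ v, IsTangentAt Sig p v → ⟪n p, v⟫ = 0)
    -- `u`, `w` are smooth near `U` and tangent to `Σ`
    (hW : IsOpen W) (hUW : U ⊆ W)
    (hu : ContDiffOn ℝ (⊤ : ℕ∞) u W) (hw : ContDiffOn ℝ (⊤ : ℕ∞) w W)
    (htu : ∀ p ∈ U, IsTangentAt Sig p (u p))
    (htw : ∀ p ∈ U, IsTangentAt Sig p (w p))
    -- (i) nonvanishing and orthogonal
    (hu0 : ∀ p ∈ U, u p ≠ 0) (hw0 : ∀ p ∈ U, w p ≠ 0)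
    (horth : ∀ p ∈ U, ⟪u p, w p⟫ = 0)
    -- (ii) vanishing Lie bracket
    (hbracket : ∀ p ∈ U, fderiv ℝ u p (w p) - fderiv ℝ w p (u p) = 0)
    -- (iii) locally gradients
    (hgrad : ∀ p ∈ U, ∃ (O : Set E3) (α β : E3 → ℝ), IsOpen O ∧ p ∈ O ∧
      ContDiffOn ℝ 1 α O ∧ ContDiffOn ℝ 1 β O ∧
      ∀ q ∈ U ∩ O, ∀ τ : E3, IsTangentAt Sig q τ →
        fderiv ℝ α q τ = ⟪u q, τ⟫ ∧ fderiv ℝ β q τ = ⟪w q, τ⟫) :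
    ∀ q ∈ U, ∃ τ : E3, τ ≠ 0 ∧ IsTangentAt Sig q τ ∧ fderiv ℝ n q τ = 0 := by
  intro q hq
  obtain ⟨O', hO', hUdef⟩ := hUopen
  have hUmem : ∀ {x : E3}, x ∈ Sig ∩ O' → x ∈ U := fun {x} hx => by rw [hUdef]; exact hx
  have hO'mem : ∀ {x : E3}, x ∈ U → x ∈ O' := fun {x} hx => (hUdef ▸ hx).2
  have hqW : q ∈ W := hUW hq
  have np0 : ∀ p ∈ U, n p ≠ 0 := by
    intro p hp h
    have h1 := hn_unit p hp
    rw [h] at h1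
    simp at h1
  have hu_diff : ∀ p ∈ W, DifferentiableAt ℝ u p := fun p hp =>
    (hu.contDiffAt (hW.mem_nhds hp)).differentiableAt (by simp)
  have hw_diff : ∀ p ∈ W, DifferentiableAt ℝ w p := fun p hp =>
    (hw.contDiffAt (hW.mem_nhds hp)).differentiableAt (by simp)
  have hn_diff : DifferentiableAt ℝ n q :=
    (hn.contDiffAt (hWn.mem_nhds (hUWn hq))).differentiableAt one_ne_zero
  have hdu_diff : DifferentiableAt ℝ (fderiv ℝ u) q :=
    ((hu.fderiv_of_isOpen (m := 1) hW (coe_le_inf _)).differentiableOn one_ne_zero).differentiableAt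
      (hW.mem_nhds hqW)
  have hnu : ∀ p ∈ U, ⟪n p, u p⟫ = 0 := fun p hp => hn_orth p hp _ (htu p hp)
  have hnw : ∀ p ∈ U, ⟪n p, w p⟫ = 0 := fun p hp => hn_orth p hp _ (htw p hp)
  have hbr : ∀ p ∈ U, fderiv ℝ u p (w p) = fderiv ℝ w p (u p) :=
    fun p hp => sub_eq_zero.1 (hbracket p hp)
  -- symmetry identities coming from the local-gradient hypothesis
  have hP3u : ∀ p ∈ U, ∀ X Y : E3, ⟪n p, X⟫ = 0 → ⟪n p, Y⟫ = 0 →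
      ⟪fderiv ℝ u p X, Y⟫ = ⟪fderiv ℝ u p Y, X⟫ := by
    intro p hp X Y hX hY
    obtain ⟨O, α, β, hO, hpO, hα, hβ, hgr⟩ := hgrad p hp
    exact grad_symm hSig hO' hUdef hW hu hn_orth hp (hUW hp) (np0 p hp) hO hpO hα
      (fun q' hq' τ ht => (hgr q' hq' τ ht).1) hX hY
  have hP3w : ∀ p ∈ U, ∀ X Y : E3, ⟪n p, X⟫ = 0 → ⟪n p, Y⟫ = 0 →
      ⟪fderiv ℝ w p X, Y⟫ = ⟪fderiv ℝ w p Y, X⟫ := by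
    intro p hp X Y hX hY
    obtain ⟨O, α, β, hO, hpO, hα, hβ, hgr⟩ := hgrad p hp
    exact grad_symm hSig hO' hUdef hW hw hn_orth hp (hUW hp) (np0 p hp) hO hpO hβ
      (fun q' hq' τ ht => (hgr q' hq' τ ht).2) hX hY
  -- first-order identities on U
  have hφ0 : ∀ x ∈ Sig ∩ O', ⟪u x, w x⟫ = 0 := fun x hx => horth x (hUmem hx)
  have zuuw : ∀ p ∈ U, ⟪fderiv ℝ u p (u p), w p⟫ = 0 := by
    intro p hp
    have hd := tangent_deriv_zero Sig O' hO' (hO'mem hp)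
      ((hu_diff p (hUW hp)).inner ℝ (hw_diff p (hUW hp))) hφ0 (htu p hp)
    rw [fderiv_inner_apply ℝ (hu_diff p (hUW hp)) (hw_diff p (hUW hp))] at hd
    have h1 : ⟪u p, fderiv ℝ w p (u p)⟫ = ⟪fderiv ℝ u p (u p), w p⟫ := by
      rw [← hbr p hp, real_inner_comm]
      exact hP3u p hp (w p) (u p) (hnw p hp) (hnu p hp)
    linarith
  have zuwu : ∀ p ∈ U, ⟪fderiv ℝ u p (w p), u p⟫ = 0 := by
    intro p hp
    rw [hP3u p hp (w p) (u p) (hnw p hp) (hnu p hp)]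
    exact zuuw p hp
  have zuww : ∀ p ∈ U, ⟪fderiv ℝ u p (w p), w p⟫ = 0 := by
    intro p hp
    have hd := tangent_deriv_zero Sig O' hO' (hO'mem hp)
      ((hu_diff p (hUW hp)).inner ℝ (hw_diff p (hUW hp))) hφ0 (htw p hp)
    rw [fderiv_inner_apply ℝ (hu_diff p (hUW hp)) (hw_diff p (hUW hp))] at hd
    have h1 : ⟪u p, fderiv ℝ w p (w p)⟫ = ⟪fderiv ℝ u p (w p), w p⟫ := by
      rw [real_inner_comm, hP3w p hp (w p) (u p) (hnw p hp) (hnu p hp), ← hbr p hp]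
    linarith
  have zwwu : ∀ p ∈ U, ⟪fderiv ℝ w p (w p), u p⟫ = 0 := by
    intro p hp
    rw [hP3w p hp (w p) (u p) (hnw p hp) (hnu p hp), ← hbr p hp]
    exact zuww p hp
  -- second-order computation at q : A C = B²
  have hFuu_diff : DifferentiableAt ℝ (fun p => fderiv ℝ u p (u p)) q :=
    hdu_diff.clm_apply (hu_diff q hqW)
  have hFuw_diff : DifferentiableAt ℝ (fun p => fderiv ℝ u p (w p)) q :=
    hdu_diff.clm_apply (hw_diff q hqW)
  have hevu : ∀ᶠ y in 𝓝 q, HasFDerivAt u (fderiv ℝ u y) y := by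
    filter_upwards [hW.mem_nhds hqW] with y hy using (hu_diff y hy).hasFDerivAt
  have hsec := second_derivative_symmetric_of_eventually hevu hdu_diff.hasFDerivAt
  have hFuu' : HasFDerivAt (fun p => fderiv ℝ u p (u p))
      ((fderiv ℝ u q).comp (fderiv ℝ u q) + (fderiv ℝ (fderiv ℝ u) q).flip (u q)) q :=
    hdu_diff.hasFDerivAt.clm_apply (hu_diff q hqW).hasFDerivAt
  have hFuw' : HasFDerivAt (fun p => fderiv ℝ u p (w p))
      ((fderiv ℝ u q).comp (fderiv ℝ w q) + (fderiv ℝ (fderiv ℝ u) q).flip (w q)) q :=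
    hdu_diff.hasFDerivAt.clm_apply (hw_diff q hqW).hasFDerivAt
  have eFuu : fderiv ℝ (fun p => fderiv ℝ u p (u p)) q (w q)
      = fderiv ℝ u q (fderiv ℝ u q (w q)) + fderiv ℝ (fderiv ℝ u) q (w q) (u q) := by
    rw [hFuu'.fderiv]
    simp
  have eFuw : fderiv ℝ (fun p => fderiv ℝ u p (w p)) q (u q)
      = fderiv ℝ u q (fderiv ℝ w q (u q)) + fderiv ℝ (fderiv ℝ u) q (u q) (w q) := by
    rw [hFuw'.fderiv]
    simp
  have hdψ₂ := tangent_deriv_zero Sig O' hO' (hO'mem hq)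
    (hFuu_diff.inner ℝ (hw_diff q hqW)) (fun x hx => zuuw x (hUmem hx)) (htw q hq)
  rw [fderiv_inner_apply ℝ hFuu_diff (hw_diff q hqW), eFuu] at hdψ₂
  have hdψ₁ := tangent_deriv_zero Sig O' hO' (hO'mem hq)
    (hFuw_diff.inner ℝ (hw_diff q hqW)) (fun x hx => zuww x (hUmem hx)) (htu q hq)
  rw [fderiv_inner_apply ℝ hFuw_diff (hw_diff q hqW), eFuw] at hdψ₁
  have hbrq : fderiv ℝ u q (w q) = fderiv ℝ w q (u q) := hbr q hq
  rw [← hbrq] at hdψ₁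
  rw [hsec (u q) (w q)] at hdψ₁
  rw [inner_add_left] at hdψ₁ hdψ₂
  have star : ⟪fderiv ℝ u q (u q), fderiv ℝ w q (w q)⟫
      = ⟪fderiv ℝ u q (w q), fderiv ℝ u q (w q)⟫ := by linarith
  set A : ℝ := ⟪fderiv ℝ u q (u q), n q⟫ with hA
  set B : ℝ := ⟪fderiv ℝ u q (w q), n q⟫ with hB
  set C : ℝ := ⟪fderiv ℝ w q (w q), n q⟫ with hC
  have hnn : ⟪n q, n q⟫ = 1 := by
    rw [real_inner_self_eq_norm_mul_norm, hn_unit q hq]; norm_num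
  have horthq : ⟪u q, w q⟫ = 0 := horth q hq
  have hun : ⟪u q, n q⟫ = 0 := by rw [real_inner_comm]; exact hnu q hq
  have hwn : ⟪w q, n q⟫ = 0 := by rw [real_inner_comm]; exact hnw q hq
  have e1 := inner_expand (hu0 q hq) (hw0 q hq) (np0 q hq) horthq hun hwn
    (fderiv ℝ u q (u q)) (fderiv ℝ w q (w q))
  rw [zwwu q hq, zuuw q hq, hnn, ← hA, ← hC] at e1
  simp only [mul_zero, zero_mul, zero_div, div_one, zero_add] at e1
  have e2 := inner_expand (hu0 q hq) (hw0 q hq) (np0 q hq) horthq hun hwn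
    (fderiv ℝ u q (w q)) (fderiv ℝ u q (w q))
  rw [zuwu q hq, zuww q hq, hnn, ← hB] at e2
  simp only [mul_zero, zero_mul, zero_div, div_one, zero_add] at e2
  have hACB : A * C = B * B := by
    rw [← e1, ← e2]
    exact star
  -- choose the kernel direction
  obtain ⟨x, y, hxy0, k1, k2⟩ : ∃ x y : ℝ, ¬(x = 0 ∧ y = 0) ∧
      x * A + y * B = 0 ∧ x * B + y * C = 0 := by
    by_cases hAB : A = 0 ∧ B = 0
    · exact ⟨1, 0, by norm_num, by rw [hAB.1, hAB.2]; ring, by rw [hAB.2]; ring⟩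
    · refine ⟨B, -A, ?_, by ring, by nlinarith [hACB]⟩
      intro ⟨h1, h2⟩
      exact hAB ⟨by linarith, h1⟩
  refine ⟨x • u q + y • w q, ?_, ?_, ?_⟩
  · -- nonzero
    intro h
    have huu : ⟪u q, u q⟫ ≠ 0 := fun h' => hu0 q hq (inner_self_eq_zero.1 h')
    have hww : ⟪w q, w q⟫ ≠ 0 := fun h' => hw0 q hq (inner_self_eq_zero.1 h')
    have hwu : ⟪w q, u q⟫ = 0 := by rw [real_inner_comm]; exact horthq
    have hx0 : x = 0 := by
      have h1 : ⟪x • u q + y • w q, u q⟫ = 0 := by rw [h, inner_zero_left]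
      rw [inner_add_left, real_inner_smul_left, real_inner_smul_left, hwu] at h1
      have : x * ⟪u q, u q⟫ = 0 := by linarith
      exact (mul_eq_zero.1 this).resolve_right huu
    have hy0 : y = 0 := by
      have h1 : ⟪x • u q + y • w q, w q⟫ = 0 := by rw [h, inner_zero_left]
      rw [inner_add_left, real_inner_smul_left, real_inner_smul_left, horthq] at h1
      have : y * ⟪w q, w q⟫ = 0 := by linarith
      exact (mul_eq_zero.1 this).resolve_right hww
    exact hxy0 ⟨hx0, hy0⟩
  · -- tangency
    have hτn : ⟪n q, x • u q + y • w q⟫ = 0 := by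
      rw [inner_add_right, real_inner_smul_right, real_inner_smul_right,
        hnu q hq, hnw q hq]
      ring
    obtain ⟨f, U₂, x₀, hU₂, hx₀, hfx₀, hf, hfS, htang, hsurj⟩ :=
      exists_good_chart hSig (hUsub hq) (np0 q hq) (hn_orth q hq)
    obtain ⟨v, hv⟩ := hsurj _ hτn
    have := htang x₀ hx₀ v
    rw [hv, hfx₀] at this
    exact this
  · -- the differential of the Gauss map kills τ
    have hτn : ⟪n q, x • u q + y • w q⟫ = 0 := by
      rw [inner_add_right, real_inner_smul_right, real_inner_smul_right,
        hnu q hq, hnw q hq]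
      ring
    have hτtan : IsTangentAt Sig q (x • u q + y • w q) := by
      obtain ⟨f, U₂, x₀, hU₂, hx₀, hfx₀, hf, hfS, htang, hsurj⟩ :=
        exists_good_chart hSig (hUsub hq) (np0 q hq) (hn_orth q hq)
      obtain ⟨v, hv⟩ := hsurj _ hτn
      have := htang x₀ hx₀ v
      rw [hv, hfx₀] at this
      exact this
    set τ : E3 := x • u q + y • w q with hτ
    -- ⟪Dn τ, n q⟫ = 0
    have g1 : ⟪fderiv ℝ n q τ, n q⟫ = 0 := by
      have hψdiff : DifferentiableAt ℝ (fun p => ⟪n p, n p⟫ - 1) q :=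
        (hn_diff.inner ℝ hn_diff).sub_const 1
      have hψ0 : ∀ z ∈ Sig ∩ O', ⟪n z, n z⟫ - 1 = 0 := by
        intro z hz
        rw [real_inner_self_eq_norm_mul_norm, hn_unit z (hUmem hz)]
        norm_num
      have hd := tangent_deriv_zero Sig O' hO' (hO'mem hq) hψdiff hψ0 hτtan
      rw [fderiv_sub_const, fderiv_inner_apply ℝ hn_diff hn_diff] at hd
      linarith [real_inner_comm (n q) (fderiv ℝ n q τ)]
    -- ⟪Dn τ, u q⟫ = 0
    have hDuτ : ⟪n q, fderiv ℝ u q τ⟫ = x * A + y * B := by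
      rw [hτ, map_add, (fderiv ℝ u q).map_smul, (fderiv ℝ u q).map_smul,
        inner_add_right, real_inner_smul_right, real_inner_smul_right,
        real_inner_comm (fderiv ℝ u q (u q)) (n q),
        real_inner_comm (fderiv ℝ u q (w q)) (n q), ← hA, ← hB]
    have g2 : ⟪fderiv ℝ n q τ, u q⟫ = 0 := by
      have hψdiff : DifferentiableAt ℝ (fun p => ⟪n p, u p⟫) q :=
        hn_diff.inner ℝ (hu_diff q hqW)
      have hψ0 : ∀ z ∈ Sig ∩ O', ⟪n z, u z⟫ = 0 := fun z hz => hnu z (hUmem hz)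
      have hd := tangent_deriv_zero Sig O' hO' (hO'mem hq) hψdiff hψ0 hτtan
      rw [fderiv_inner_apply ℝ hn_diff (hu_diff q hqW), hDuτ, k1] at hd
      linarith
    -- ⟪Dn τ, w q⟫ = 0
    have hDwτ : ⟪n q, fderiv ℝ w q τ⟫ = x * B + y * C := by
      rw [hτ, map_add, (fderiv ℝ w q).map_smul, (fderiv ℝ w q).map_smul,
        inner_add_right, real_inner_smul_right, real_inner_smul_right, ← hbrq,
        real_inner_comm (fderiv ℝ u q (w q)) (n q),
        real_inner_comm (fderiv ℝ w q (w q)) (n q), ← hB, ← hC]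
    have g3 : ⟪fderiv ℝ n q τ, w q⟫ = 0 := by
      have hψdiff : DifferentiableAt ℝ (fun p => ⟪n p, w p⟫) q :=
        hn_diff.inner ℝ (hw_diff q hqW)
      have hψ0 : ∀ z ∈ Sig ∩ O', ⟪n z, w z⟫ = 0 := fun z hz => hnw z (hUmem hz)
      have hd := tangent_deriv_zero Sig O' hO' (hO'mem hq) hψdiff hψ0 hτtan
      rw [fderiv_inner_apply ℝ hn_diff (hw_diff q hqW), hDwτ, k2] at hd
      linarith
    exact ortho_zero (hu0 q hq) (hw0 q hq) (np0 q hq) horthq hun hwn g2 g3 g1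
end
end

section
/- Let ν > 0, α > 0, Γ ∈ ℝ, and define g(r) = Γ(1 − e^{−α r²/(2ν)})/(2π r²) for r > 0 (extended smoothly to r = 0 by its limit Γα/(4πν)). Define the Burgers vortex velocity field v : ℝ³ → ℝ³ by v(x, y, z) = (−αx − g(r) y, −αy + g(r) x, 2αz) with r = √(x² + y²). Then v is smooth, div v = 0 everywhere, and there exists a smooth pressure p : ℝ³ → ℝ such that the stationary Navier–Stokes equations (v·∇)v + ∇p = ν Δv hold on all of ℝ³. -/
noncomputable section

open MeasureTheory Filter Set
open scoped RealInnerProductSpace Topology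

/-! ### Auxiliary lemmas for statement13 -/

/-- Complex extension of the Burgers-vortex profile function. -/
noncomputable def st13F (b c : ℝ) : ℂ → ℂ :=
  fun z => if z = 0 then (c*b : ℂ) else c * (1 - Complex.exp (-(b*z))) / z

lemma st13F_analytic (b c : ℝ) (z : ℂ) : AnalyticAt ℂ (st13F b c) z := by
  set F : ℂ → ℂ := st13F b c with hF
  have hform : ∀ z : ℂ, z ≠ 0 → F =ᶠ[nhds z] fun w => c * (1 - Complex.exp (-(b*w))) / w := by
    intro z hz
    filter_upwards [isOpen_compl_singleton.mem_nhds hz] with w hw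
    simp only [Set.mem_compl_iff, Set.mem_singleton_iff] at hw
    simp [F, st13F, hw]
  have hdiff : ∀ z : ℂ, z ≠ 0 → DifferentiableAt ℂ F z := by
    intro z hz
    have h1 : DifferentiableAt ℂ (fun w => (c:ℂ) * (1 - Complex.exp (-(b*w))) / w) z := by
      apply DifferentiableAt.div _ differentiableAt_fun_id hz
      exact (differentiableAt_const _).mul ((differentiableAt_const _).sub
        (((differentiableAt_const _).mul differentiableAt_fun_id).neg.cexp))
    exact h1.congr_of_eventuallyEq (hform z hz)
  rcases eq_or_ne z 0 with rfl | hz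
  · apply Complex.analyticAt_of_differentiable_on_punctured_nhds_of_continuousAt
    · filter_upwards [self_mem_nhdsWithin] with z hz
      exact hdiff z hz
    · have hslope : Filter.Tendsto (fun z : ℂ => (1 - Complex.exp (-(b*z))) / z)
          (nhdsWithin 0 {(0:ℂ)}ᶜ) (nhds (b : ℂ)) := by
        have hd : HasDerivAt (fun z : ℂ => 1 - Complex.exp (-(b*z))) (b : ℂ) 0 := by
          have h1 : HasDerivAt (fun z : ℂ => -(b*z)) (-(b:ℂ)) 0 := by
            simpa using ((hasDerivAt_id (0:ℂ)).const_mul (b:ℂ)).fun_neg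
          simpa using ((hasDerivAt_const (0:ℂ) (1:ℂ)).fun_sub h1.cexp)
        have h2 := hasDerivAt_iff_tendsto_slope.mp hd
        refine h2.congr' ?_
        filter_upwards [self_mem_nhdsWithin] with z hz
        simp [slope, hz, div_eq_inv_mul]
      have hT : Filter.Tendsto F (nhdsWithin 0 {(0:ℂ)}ᶜ) (nhds ((c:ℂ)*b)) := by
        have h3 := hslope.const_mul (c:ℂ)
        refine h3.congr' ?_
        filter_upwards [self_mem_nhdsWithin] with z hz
        simp only [Set.mem_compl_iff, Set.mem_singleton_iff] at hz
        simp [F, st13F, hz]; ring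
      rw [ContinuousAt]
      have hFz : F 0 = (c:ℂ)*b := by simp [F, st13F]
      rw [hFz, ← nhdsNE_sup_pure]
      refine Filter.Tendsto.sup hT ?_
      have := (Filter.tendsto_pure_pure F (0:ℂ)).mono_right (pure_le_nhds _)
      simpa [hFz] using this
  · exact (analyticAt_congr (hform z hz).symm).mp <| by
      apply AnalyticAt.div
      · exact (analyticAt_const.mul ((analyticAt_const.sub
          ((analyticAt_const.mul (analyticAt_id)).neg.cexp))))
      · exact analyticAt_id
      · exact hz

lemma st13F_real (b c : ℝ) (t : ℝ) :
    st13F b c t = (((if t = 0 then c * b else c * (1 - Real.exp (-(b*t))) / t : ℝ)) : ℂ) := by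
  rcases eq_or_ne t 0 with rfl | ht
  · simp [st13F]
  · have ht' : (t:ℂ) ≠ 0 := by exact_mod_cast ht
    simp only [st13F, ht, ht', if_false]
    have harg : (-(↑b * ↑t) : ℂ) = ((-(b*t) : ℝ) : ℂ) := by push_cast; ring
    rw [harg, ← Complex.ofReal_exp]
    norm_cast

lemma st13_re_analytic (f : ℂ → ℂ) (hf : ∀ z, AnalyticAt ℂ f z) (s : ℝ) :
    AnalyticAt ℝ (fun t : ℝ => (f t).re) s := by
  apply (Complex.reCLM.analyticAt _).comp
  exact ((hf s).restrictScalars).comp (Complex.ofRealCLM.analyticAt s)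

lemma st13_analyticG (b c : ℝ) (s : ℝ) :
    AnalyticAt ℝ (fun s : ℝ => if s = 0 then c * b else c * (1 - Real.exp (-(b*s))) / s) s := by
  refine (st13_re_analytic _ (st13F_analytic b c) s).congr ?_
  filter_upwards with t
  rw [st13F_real]
  simp

lemma st13_smooth_aux (b c : ℝ) :
    ContDiff ℝ (⊤ : ℕ∞) (fun s : ℝ => if s = 0 then c * b else c * (1 - Real.exp (-(b*s))) / s) :=
  contDiff_iff_contDiffAt.mpr fun s => (st13_analyticG b c s).contDiffAt

open intervalIntegral in
lemma st13_primitive (Q : ℂ → ℂ) (hQd : Differentiable ℂ Q) (z : ℂ) :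
    HasDerivAt (fun w : ℂ => ∫ t in (0:ℝ)..1, w * Q ((t:ℂ)*w)) (Q z) z := by
  have hQanal : AnalyticOnNhd ℂ Q Set.univ := fun w _ => hQd.analyticAt w
  have hQ'anal : AnalyticOnNhd ℂ (deriv Q) Set.univ := hQanal.deriv
  set Q' := deriv Q with hQ'def
  have hQ'd : ∀ w, HasDerivAt Q (Q' w) w := fun w => (hQd w).hasDerivAt
  have hQc : Continuous Q := hQd.continuous
  have hQ'c : Continuous Q' := by
    rw [continuous_iff_continuousAt]
    exact fun w => (hQ'anal w (Set.mem_univ w)).continuousAt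
  have hcomp : IsCompact ((Metric.closedBall z 1) ×ˢ (Set.Icc (0:ℝ) 1)) :=
    (isCompact_closedBall _ _).prod isCompact_Icc
  have hcont : ContinuousOn
      (fun pr : ℂ × ℝ => Q ((pr.2:ℂ)*pr.1) + pr.1*((pr.2:ℂ)*Q' ((pr.2:ℂ)*pr.1)))
      ((Metric.closedBall z 1) ×ˢ (Set.Icc (0:ℝ) 1)) := by
    apply Continuous.continuousOn
    fun_prop
  obtain ⟨C, hC⟩ := hcomp.exists_bound_of_continuousOn hcont
  have key := intervalIntegral.hasDerivAt_integral_of_dominated_loc_of_deriv_le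
    (μ := MeasureTheory.volume) (a := 0) (b := 1)
    (F := fun w t => w * Q ((t:ℂ)*w))
    (F' := fun w t => Q ((t:ℂ)*w) + w*((t:ℂ)*Q' ((t:ℂ)*w)))
    (x₀ := z) (bound := fun _ => C) (s := Metric.ball z 1) (Metric.ball_mem_nhds z zero_lt_one)
    (Filter.Eventually.of_forall fun w =>
      ((by fun_prop : Continuous fun t : ℝ => w * Q ((t:ℂ)*w))).aestronglyMeasurable)
    (by apply Continuous.intervalIntegrable; fun_prop)
    ((by fun_prop : Continuous fun t : ℝ => Q ((t:ℂ)*z) + z*((t:ℂ)*Q' ((t:ℂ)*z))).aestronglyMeasurable)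
    (Filter.Eventually.of_forall fun t ht x hx => by
      have ht' : t ∈ Set.Icc (0:ℝ) 1 := by
        rw [Set.uIoc_of_le zero_le_one] at ht
        exact ⟨ht.1.le, ht.2⟩
      exact hC (x, t) (Set.mk_mem_prod (Metric.ball_subset_closedBall hx) ht'))
    (intervalIntegrable_const)
    (Filter.Eventually.of_forall fun t ht x hx => by
      have h1 : HasDerivAt (fun w : ℂ => Q ((t:ℂ)*w)) (Q' ((t:ℂ)*x) * (t:ℂ)) x := by
        have := (hQ'd ((t:ℂ)*x)).comp x (((hasDerivAt_id x).const_mul (t:ℂ)))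
        simpa [Function.comp_def] using this
      have h2 := (hasDerivAt_id x).fun_mul h1
      exact h2.congr_deriv (by simp only [id_eq, one_mul]; ring))
  have hval : (∫ t in (0:ℝ)..1, (Q ((t:ℂ)*z) + z*((t:ℂ)*Q' ((t:ℂ)*z)))) = Q z := by
    have hd : ∀ t ∈ Set.uIcc (0:ℝ) 1,
        HasDerivAt (fun t : ℝ => (t:ℂ)*Q ((t:ℂ)*z)) (Q ((t:ℂ)*z) + z*((t:ℂ)*Q' ((t:ℂ)*z))) t := by
      intro t _
      have h0 : HasDerivAt (fun w : ℂ => w * Q (w*z)) (Q ((t:ℂ)*z) + (t:ℂ)*(Q' ((t:ℂ)*z)*z)) (t:ℂ) := by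
        have ha : HasDerivAt (fun w : ℂ => Q (w*z)) (Q' ((t:ℂ)*z)*z) (t:ℂ) := by
          have := (hQ'd ((t:ℂ)*z)).comp (t:ℂ) ((hasDerivAt_id (t:ℂ)).mul_const z)
          simpa [Function.comp_def] using this
        have := (hasDerivAt_id (t:ℂ)).fun_mul ha
        exact this.congr_deriv (by simp only [id_eq, one_mul])
      have := h0.comp_ofReal
      convert this using 1
      ring
    rw [intervalIntegral.integral_eq_sub_of_hasDerivAt hd
      (by apply Continuous.intervalIntegrable; fun_prop)]
    simp
  rw [← hval]
  exact key.2

lemma st13_mk3_apply (a b c : ℝ) (i : Fin 3) : mk3 a b c i = ![a,b,c] i := rfl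

lemma st13_e3_apply (i j : Fin 3) : e3 i j = if j = i then 1 else 0 := by
  simp [e3, EuclideanSpace.single_apply]

lemma st13_pder_eq (v : E3 → E3) (i j : Fin 3) (p : E3) (hv : DifferentiableAt ℝ v p) :
    pder v i j p = fderiv ℝ (fun q => v q i) p (e3 j) := by
  have h2 := ((EuclideanSpace.proj (𝕜 := ℝ) i).hasFDerivAt.comp p hv.hasFDerivAt).fderiv
  have h : (fun q => v q i) = (⇑(EuclideanSpace.proj (𝕜 := ℝ) i) ∘ v) := rfl
  rw [h, h2]; rfl

lemma st13_hasF_coord (i : Fin 3) (p : E3) :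
    HasFDerivAt (fun q : E3 => q i) (EuclideanSpace.proj (𝕜 := ℝ) i) p :=
  (EuclideanSpace.proj (𝕜 := ℝ) i).hasFDerivAt

lemma st13_hasF_rho (p : E3) :
    HasFDerivAt (fun q : E3 => q 0 ^ 2 + q 1 ^ 2)
      ((p 0 • EuclideanSpace.proj 0 + p 0 • EuclideanSpace.proj 0) +
       (p 1 • EuclideanSpace.proj 1 + p 1 • EuclideanSpace.proj 1) : E3 →L[ℝ] ℝ) p := by
  simp only [pow_two]
  exact ((st13_hasF_coord 0 p).mul (st13_hasF_coord 0 p)).add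
    ((st13_hasF_coord 1 p).mul (st13_hasF_coord 1 p))

lemma st13_hasF_comp_rho (f f' : ℝ → ℝ) (hf : ∀ s, HasDerivAt f (f' s) s) (p : E3) :
    HasFDerivAt (fun q : E3 => f (q 0 ^ 2 + q 1 ^ 2))
      (f' (p 0 ^ 2 + p 1 ^ 2) •
        ((p 0 • EuclideanSpace.proj 0 + p 0 • EuclideanSpace.proj 0) +
         (p 1 • EuclideanSpace.proj 1 + p 1 • EuclideanSpace.proj 1) : E3 →L[ℝ] ℝ)) p :=
  (hf _).comp_hasFDerivAt p (st13_hasF_rho p)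

lemma st13_coord_contDiff (i : Fin 3) : ContDiff ℝ (⊤ : ℕ∞) (fun q : E3 => q i) :=
  (EuclideanSpace.proj (𝕜 := ℝ) i).contDiff

lemma st13_rho_contDiff : ContDiff ℝ (⊤ : ℕ∞) (fun q : E3 => q 0 ^ 2 + q 1 ^ 2) :=
  ((st13_coord_contDiff 0).pow 2).add ((st13_coord_contDiff 1).pow 2)


set_option maxHeartbeats 1000000 in
/-- For `ν > 0`, `α > 0`, `Γ ∈ ℝ`, the Burgers vortex
`v(x,y,z) = (−αx − g(r)y, −αy + g(r)x, 2αz)` with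
`g(r) = Γ(1 − e^{−αr²/(2ν)})/(2πr²)` (extended at `r = 0` by its limit `Γα/(4πν)`)
is smooth, divergence-free, and solves the stationary Navier–Stokes equations
`(v·∇)v + ∇p = νΔv` on all of ℝ³ for some smooth pressure `p`. -/
theorem statement13
    (ν α Γ : ℝ) (hν : 0 < ν) (hα : 0 < α)
    (g : ℝ → ℝ)
    (hg : ∀ r : ℝ, g r =
      if r = 0 then Γ * α / (4 * Real.pi * ν)
      else Γ * (1 - Real.exp (-(α * r ^ 2) / (2 * ν))) / (2 * Real.pi * r ^ 2))
    (v : E3 → E3)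
    (hv : ∀ p : E3, v p =
      mk3 (-(α * p 0) - g (Real.sqrt ((p 0) ^ 2 + (p 1) ^ 2)) * p 1)
          (-(α * p 1) + g (Real.sqrt ((p 0) ^ 2 + (p 1) ^ 2)) * p 0)
          (2 * α * p 2)) :
    ContDiff ℝ (⊤ : ℕ∞) v ∧ (∀ p : E3, div3 v p = 0) ∧
      ∃ press : E3 → ℝ, ContDiff ℝ (⊤ : ℕ∞) press ∧
        ∀ p : E3, ∀ i : Fin 3,
          (∑ j, v p j * pder v i j p) + fderiv ℝ press p (e3 i) =
            ν * lap3 (fun x => v x i) p := by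
  have hν' : ν ≠ 0 := ne_of_gt hν
  have hπ : Real.pi ≠ 0 := Real.pi_ne_zero
  set c := Γ / (2*Real.pi) with hcdef
  set β := α / (2*ν) with hβdef
  set G : ℝ → ℝ := fun s => if s = 0 then c * β else c * (1 - Real.exp (-(β*s))) / s with hGdef
  have Gsmooth : ContDiff ℝ (⊤ : ℕ∞) G := by rw [hGdef]; exact st13_smooth_aux β c
  set G1 : ℝ → ℝ := deriv G with hG1def
  set G2 : ℝ → ℝ := deriv G1 with hG2def
  have hG : ∀ s, HasDerivAt G (G1 s) s := fun s => (Gsmooth.differentiable (by simp) s).hasDerivAt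
  have Ganal : AnalyticOnNhd ℝ G Set.univ := by
    intro s _
    rw [hGdef]; exact st13_analyticG β c s
  have G1anal : AnalyticOnNhd ℝ G1 Set.univ := by
    rw [hG1def]; exact Ganal.deriv
  have G1smooth : ContDiff ℝ (⊤ : ℕ∞) G1 :=
    contDiff_iff_contDiffAt.mpr fun s => (G1anal s (Set.mem_univ s)).contDiffAt
  have hG1 : ∀ s, HasDerivAt G1 (G2 s) s := fun s => (G1smooth.differentiable (by simp) s).hasDerivAt
  have hHeq : (fun t : ℝ => t * G t) = fun t => c * (1 - Real.exp (-(β*t))) := by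
    funext t
    rcases eq_or_ne t 0 with rfl | ht
    · simp [hGdef]
    · rw [hGdef]; simp only [ht, if_false]; field_simp
  have I1 : ∀ s, G s + s * G1 s = c * (β * Real.exp (-(β*s))) := by
    intro s
    have h1 : HasDerivAt (fun t : ℝ => t * G t) (G s + s * G1 s) s := by
      have := (hasDerivAt_id s).mul (hG s)
      exact this.congr_deriv (by simp only [id_eq, one_mul])
    rw [hHeq] at h1
    have h2 : HasDerivAt (fun t : ℝ => c * (1 - Real.exp (-(β*t))))
        (c * (β * Real.exp (-(β*s)))) s := by
      have ha : HasDerivAt (fun t : ℝ => -(β*t)) (-β) s := by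
        simpa using ((hasDerivAt_id s).const_mul β).fun_neg
      have hb := ((hasDerivAt_const s (1:ℝ)).sub ha.exp).const_mul c
      exact hb.congr_deriv (by ring)
    exact h1.unique h2
  have hODE : ∀ s, 2*ν*(2*G1 s + s*G2 s) + α*(G s + s*G1 s) = 0 := by
    intro s
    have h1 : HasDerivAt (fun t : ℝ => G t + t * G1 t) (2*G1 s + s*G2 s) s := by
      have := (hG s).add ((hasDerivAt_id s).mul (hG1 s))
      exact this.congr_deriv (by simp only [id_eq, one_mul]; ring)
    rw [show (fun t : ℝ => G t + t * G1 t) = fun t => c * (β * Real.exp (-(β*t)))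
        from funext I1] at h1
    have h2 : HasDerivAt (fun t : ℝ => c * (β * Real.exp (-(β*t))))
        (-β * (c * (β * Real.exp (-(β*s))))) s := by
      have ha : HasDerivAt (fun t : ℝ => -(β*t)) (-β) s := by
        simpa using ((hasDerivAt_id s).const_mul β).fun_neg
      have hb := (ha.exp.const_mul β).const_mul c
      exact hb.congr_deriv (by ring)
    have h3 := h1.unique h2
    have h4 := I1 s
    have hβν : 2*ν*β = α := by rw [hβdef]; field_simp
    linear_combination (2*ν)*h3 + α*h4 - (c * (β * Real.exp (-(β*s))))*hβν
  have hg2 : ∀ x y : ℝ, g (Real.sqrt (x^2+y^2)) = G (x^2+y^2) := by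
    have hcβ : c * β = Γ * α / (4 * Real.pi * ν) := by
      rw [hcdef, hβdef, div_mul_div_comm]
      ring_nf
    intro x y
    have hs0 : (0:ℝ) ≤ x^2+y^2 := by positivity
    rcases eq_or_ne (x^2+y^2) 0 with h | h
    · rw [h, Real.sqrt_zero, hg 0, if_pos rfl]
      have hG0 : G 0 = c * β := by simp [hGdef]
      rw [hG0]
      exact hcβ.symm
    · have hsr : Real.sqrt (x^2+y^2) ≠ 0 := by
        rw [Real.sqrt_ne_zero']
        exact lt_of_le_of_ne hs0 (Ne.symm h)
      rw [hg, if_neg hsr, Real.sq_sqrt hs0]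
      simp only [hGdef]
      rw [if_neg h, hcdef, hβdef]
      rw [show -(α*(x^2+y^2))/(2*ν) = -(α/(2*ν)*(x^2+y^2)) by ring]
      field_simp
  set w0 : E3 → ℝ := fun q => -(α * q 0) - G (q 0^2 + q 1^2) * q 1 with hw0def
  set w1 : E3 → ℝ := fun q => -(α * q 1) + G (q 0^2 + q 1^2) * q 0 with hw1def
  set w2 : E3 → ℝ := fun q => 2 * α * q 2 with hw2def
  have hvc : ∀ p : E3, v p = mk3 (w0 p) (w1 p) (w2 p) := by
    intro p
    rw [hv p, hg2 (p 0) (p 1), hw0def, hw1def, hw2def]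
  have hvc0 : (fun q : E3 => v q 0) = w0 := by
    funext q; rw [hvc q]; rfl
  have hvc1 : (fun q : E3 => v q 1) = w1 := by
    funext q; rw [hvc q]; rfl
  have hvc2 : (fun q : E3 => v q 2) = w2 := by
    funext q; rw [hvc q]; rfl
  have hGcomp : ContDiff ℝ (⊤ : ℕ∞) (fun q : E3 => G (q 0^2 + q 1^2)) :=
    Gsmooth.comp st13_rho_contDiff
  have hw0s : ContDiff ℝ (⊤ : ℕ∞) w0 := by
    rw [hw0def]
    exact ((contDiff_const.mul (st13_coord_contDiff 0)).neg).sub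
      (hGcomp.mul (st13_coord_contDiff 1))
  have hw1s : ContDiff ℝ (⊤ : ℕ∞) w1 := by
    rw [hw1def]
    exact ((contDiff_const.mul (st13_coord_contDiff 1)).neg).add
      (hGcomp.mul (st13_coord_contDiff 0))
  have hw2s : ContDiff ℝ (⊤ : ℕ∞) w2 := by
    rw [hw2def]
    exact contDiff_const.mul (st13_coord_contDiff 2)
  have hvs : ContDiff ℝ (⊤ : ℕ∞) v := by
    have hfun : v = fun p => (EuclideanSpace.equiv (Fin 3) ℝ).symm ![w0 p, w1 p, w2 p] := by
      funext p; rw [hvc p]; rfl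
    rw [hfun]
    apply (EuclideanSpace.equiv (Fin 3) ℝ).symm.contDiff.comp
    apply contDiff_pi.mpr
    intro i
    fin_cases i <;>
      simp only [Matrix.cons_val_zero, Matrix.cons_val_one, Matrix.head_cons,
        Matrix.cons_val_two, Matrix.tail_cons] <;>
      assumption
  have hvd : ∀ p, DifferentiableAt ℝ v p := fun p => (hvs.differentiable (by simp)).differentiableAt
  -- first derivatives
  have dw0 : ∀ (p u : E3), fderiv ℝ w0 p u =
      -(α * u 0) - (G1 (p 0^2+p 1^2) * (2*p 0*u 0 + 2*p 1*u 1) * p 1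
        + G (p 0^2+p 1^2) * u 1) := by
    intro p u
    rw [hw0def]
    have h := (((st13_hasF_coord 0 p).const_mul α).neg).sub
      ((st13_hasF_comp_rho G G1 hG p).mul (st13_hasF_coord 1 p))
    erw [h.fderiv]
    simp [ContinuousLinearMap.smul_apply, PiLp.proj_apply, smul_eq_mul]
    ring
  have dw1 : ∀ (p u : E3), fderiv ℝ w1 p u =
      -(α * u 1) + (G1 (p 0^2+p 1^2) * (2*p 0*u 0 + 2*p 1*u 1) * p 0
        + G (p 0^2+p 1^2) * u 0) := by
    intro p u
    rw [hw1def]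
    have h := (((st13_hasF_coord 1 p).const_mul α).neg).add
      ((st13_hasF_comp_rho G G1 hG p).mul (st13_hasF_coord 0 p))
    erw [h.fderiv]
    simp [ContinuousLinearMap.smul_apply, PiLp.proj_apply, smul_eq_mul]
    ring
  have dw2 : ∀ (p u : E3), fderiv ℝ w2 p u = 2 * α * u 2 := by
    intro p u
    rw [hw2def]
    have h := (st13_hasF_coord 2 p).const_mul (2*α)
    rw [h.fderiv]
    simp [ContinuousLinearMap.smul_apply, PiLp.proj_apply, smul_eq_mul]
  -- pressure
  set QC : ℂ → ℂ := fun z => (st13F β c z)^2/2 with hQCdef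
  have hQCd : Differentiable ℂ QC := by
    intro z
    rw [hQCdef]
    exact (((st13F_analytic β c z).differentiableAt).pow 2).div_const 2
  set PC : ℂ → ℂ := fun w => ∫ t in (0:ℝ)..1, w * QC ((t:ℂ)*w) with hPCdef
  have hPCder : ∀ z, HasDerivAt PC (QC z) z := by
    intro z; rw [hPCdef]; exact st13_primitive QC hQCd z
  have hPCd : Differentiable ℂ PC := fun z => (hPCder z).differentiableAt
  set P : ℝ → ℝ := fun s => (PC s).re with hPdef
  have hQCreal : ∀ s : ℝ, QC s = ((((G s)^2/2 : ℝ)) : ℂ) := by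
    intro s
    simp only [hQCdef]
    have h1 : st13F β c s = ((G s : ℝ) : ℂ) := by
      rw [st13F_real]
    rw [h1]
    push_cast
    ring
  have hPder : ∀ s, HasDerivAt P ((G s)^2/2) s := by
    intro s
    have h2 := HasDerivAt.real_of_complex (hPCder (s : ℂ))
    rw [hQCreal s, Complex.ofReal_re] at h2
    rw [hPdef]
    exact h2
  have hPs : ContDiff ℝ (⊤ : ℕ∞) P := by
    refine contDiff_iff_contDiffAt.mpr fun s => AnalyticAt.contDiffAt ?_
    rw [hPdef]
    exact st13_re_analytic PC (fun z => hPCd.analyticAt z) s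
  set fP : ℝ → ℝ := fun s => -(α^2/2) * s + P s with hfPdef
  have hfPder : ∀ s, HasDerivAt fP (-(α^2/2) + (G s)^2/2) s := by
    intro s; rw [hfPdef]
    have h := ((hasDerivAt_id s).const_mul (-(α^2/2))).add (hPder s)
    exact h.congr_deriv (by ring)
  have hfPs : ContDiff ℝ (⊤ : ℕ∞) fP := by
    rw [hfPdef]; exact (contDiff_const.mul contDiff_id).add hPs
  set press : E3 → ℝ := fun q => fP (q 0^2 + q 1^2) - 2*α^2*(q 2 * q 2) with hpressdef
  have hpresss : ContDiff ℝ (⊤ : ℕ∞) press := by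
    rw [hpressdef]
    exact (hfPs.comp st13_rho_contDiff).sub
      (contDiff_const.mul ((st13_coord_contDiff 2).mul (st13_coord_contDiff 2)))
  have dpress : ∀ (p u : E3), fderiv ℝ press p u =
      (-(α^2/2) + (G (p 0^2+p 1^2))^2/2) * (2*p 0*u 0 + 2*p 1*u 1)
        - 2*α^2*(p 2*u 2 + p 2*u 2) := by
    intro p u
    rw [hpressdef]
    have h := (st13_hasF_comp_rho fP (fun s => -(α^2/2) + (G s)^2/2) hfPder p).sub
      (((st13_hasF_coord 2 p).mul (st13_hasF_coord 2 p)).const_mul (2*α^2))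
    erw [h.fderiv]
    simp [ContinuousLinearMap.smul_apply, PiLp.proj_apply, smul_eq_mul]
    ring
  -- second derivatives
  have hA00 : (fun x : E3 => fderiv ℝ w0 x (e3 0)) =
      (fun x : E3 => -α - 2 * x 0 * x 1 * G1 (x 0^2 + x 1^2)) := by
    funext x; rw [dw0 x (e3 0)]; simp [st13_e3_apply]; ring
  have dA00 : ∀ p : E3,
      fderiv ℝ (fun x : E3 => -α - 2 * x 0 * x 1 * G1 (x 0^2 + x 1^2)) p (e3 0)
      = -(2 * p 1 * G1 (p 0^2+p 1^2) + 4 * p 0^2 * p 1 * G2 (p 0^2+p 1^2)) := by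
    intro p
    have h := (hasFDerivAt_const (-α) p).sub
      ((((st13_hasF_coord 0 p).const_mul 2).mul (st13_hasF_coord 1 p)).mul
        (st13_hasF_comp_rho G1 G2 hG1 p))
    erw [h.fderiv]
    simp [st13_e3_apply, ContinuousLinearMap.smul_apply, PiLp.proj_apply, smul_eq_mul]
    ring
  have hA01 : (fun x : E3 => fderiv ℝ w0 x (e3 1)) =
      (fun x : E3 => -(2 * x 1 * x 1 * G1 (x 0^2 + x 1^2)) - G (x 0^2 + x 1^2)) := by
    funext x; rw [dw0 x (e3 1)]; simp [st13_e3_apply]; ring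
  have dA01 : ∀ p : E3,
      fderiv ℝ (fun x : E3 => -(2 * x 1 * x 1 * G1 (x 0^2 + x 1^2)) - G (x 0^2 + x 1^2)) p (e3 1)
      = -(6 * p 1 * G1 (p 0^2+p 1^2) + 4 * p 1^3 * G2 (p 0^2+p 1^2)) := by
    intro p
    have h := ((((st13_hasF_coord 1 p).const_mul 2).mul (st13_hasF_coord 1 p)).mul
      (st13_hasF_comp_rho G1 G2 hG1 p)).neg.sub (st13_hasF_comp_rho G G1 hG p)
    erw [h.fderiv]
    simp [st13_e3_apply, ContinuousLinearMap.smul_apply, PiLp.proj_apply, smul_eq_mul]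
    ring
  have hA02 : (fun x : E3 => fderiv ℝ w0 x (e3 2)) = (fun _ : E3 => (0:ℝ)) := by
    funext x; rw [dw0 x (e3 2)]; simp [st13_e3_apply]
  have hA10 : (fun x : E3 => fderiv ℝ w1 x (e3 0)) =
      (fun x : E3 => 2 * x 0 * x 0 * G1 (x 0^2 + x 1^2) + G (x 0^2 + x 1^2)) := by
    funext x; rw [dw1 x (e3 0)]; simp [st13_e3_apply]; ring
  have dA10 : ∀ p : E3,
      fderiv ℝ (fun x : E3 => 2 * x 0 * x 0 * G1 (x 0^2 + x 1^2) + G (x 0^2 + x 1^2)) p (e3 0)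
      = 6 * p 0 * G1 (p 0^2+p 1^2) + 4 * p 0^3 * G2 (p 0^2+p 1^2) := by
    intro p
    have h := ((((st13_hasF_coord 0 p).const_mul 2).mul (st13_hasF_coord 0 p)).mul
      (st13_hasF_comp_rho G1 G2 hG1 p)).add (st13_hasF_comp_rho G G1 hG p)
    erw [h.fderiv]
    simp [st13_e3_apply, ContinuousLinearMap.smul_apply, PiLp.proj_apply, smul_eq_mul]
    ring
  have hA11 : (fun x : E3 => fderiv ℝ w1 x (e3 1)) =
      (fun x : E3 => -α + 2 * x 0 * x 1 * G1 (x 0^2 + x 1^2)) := by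
    funext x; rw [dw1 x (e3 1)]; simp [st13_e3_apply]; ring
  have dA11 : ∀ p : E3,
      fderiv ℝ (fun x : E3 => -α + 2 * x 0 * x 1 * G1 (x 0^2 + x 1^2)) p (e3 1)
      = 2 * p 0 * G1 (p 0^2+p 1^2) + 4 * p 0 * p 1^2 * G2 (p 0^2+p 1^2) := by
    intro p
    have h := (hasFDerivAt_const (-α) p).add
      ((((st13_hasF_coord 0 p).const_mul 2).mul (st13_hasF_coord 1 p)).mul
        (st13_hasF_comp_rho G1 G2 hG1 p))
    erw [h.fderiv]
    simp [st13_e3_apply, ContinuousLinearMap.smul_apply, PiLp.proj_apply, smul_eq_mul]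
    ring
  have hA12 : (fun x : E3 => fderiv ℝ w1 x (e3 2)) = (fun _ : E3 => (0:ℝ)) := by
    funext x; rw [dw1 x (e3 2)]; simp [st13_e3_apply]
  have hA2 : ∀ j : Fin 3, (fun x : E3 => fderiv ℝ w2 x (e3 j)) =
      (fun _ : E3 => 2 * α * (e3 j) 2) := by
    intro j; funext x; rw [dw2 x (e3 j)]
  refine ⟨hvs, ?_, press, hpresss, ?_⟩
  · intro p
    simp only [div3, Fin.sum_univ_three]
    rw [st13_pder_eq v 0 0 p (hvd p), st13_pder_eq v 1 1 p (hvd p),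
      st13_pder_eq v 2 2 p (hvd p), hvc0, hvc1, hvc2,
      dw0 p (e3 0), dw1 p (e3 1), dw2 p (e3 2)]
    simp [st13_e3_apply]
    ring
  · intro p i
    fin_cases i
    · -- i = 0
      simp only [lap3, Fin.sum_univ_three, Fin.zero_eta, Fin.mk_one, Fin.reduceFinMk, Fin.isValue]
      rw [st13_pder_eq v 0 0 p (hvd p), st13_pder_eq v 0 1 p (hvd p),
        st13_pder_eq v 0 2 p (hvd p), hvc0, hvc p, hA00, hA01, hA02,
        dA00 p, dA01 p, dw0 p (e3 0), dw0 p (e3 1), dw0 p (e3 2), dpress p (e3 0)]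
      rw [hw0def, hw1def, hw2def]
      simp [st13_e3_apply, st13_mk3_apply, fderiv_const]
      linear_combination (2 * p 1) * hODE (p 0^2 + p 1^2)
    · -- i = 1
      simp only [lap3, Fin.sum_univ_three, Fin.zero_eta, Fin.mk_one, Fin.reduceFinMk, Fin.isValue]
      rw [st13_pder_eq v 1 0 p (hvd p), st13_pder_eq v 1 1 p (hvd p),
        st13_pder_eq v 1 2 p (hvd p), hvc1, hvc p, hA10, hA11, hA12,
        dA10 p, dA11 p, dw1 p (e3 0), dw1 p (e3 1), dw1 p (e3 2), dpress p (e3 1)]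
      rw [hw0def, hw1def, hw2def]
      simp [st13_e3_apply, st13_mk3_apply, fderiv_const]
      linear_combination (-(2 * p 0)) * hODE (p 0^2 + p 1^2)
    · -- i = 2
      simp only [lap3, Fin.sum_univ_three, Fin.zero_eta, Fin.mk_one, Fin.reduceFinMk, Fin.isValue]
      rw [st13_pder_eq v 2 0 p (hvd p), st13_pder_eq v 2 1 p (hvd p),
        st13_pder_eq v 2 2 p (hvd p), hvc2, hvc p, hA2 0, hA2 1, hA2 2,
        dw2 p (e3 0), dw2 p (e3 1), dw2 p (e3 2), dpress p (e3 2)]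
      rw [hw0def, hw1def, hw2def]
      simp [st13_e3_apply, st13_mk3_apply, fderiv_const]
      ring
end
end

section
/- Let ν > 0, α > 0, Γ ∈ ℝ, and let v be the Burgers vortex field v(x, y, z) = (−αx − g(r) y, −αy + g(r) x, 2αz) with g(r) = Γ(1 − e^{−α r²/(2ν)})/(2π r²) and r = √(x² + y²). Then: (a) the vorticity curl v equals (0, 0, ω(r)) with ω(r) = (αΓ/(2πν)) e^{−α r²/(2ν)}; and (b) for every R > 0, the dissipation over the disk of radius R per unit length satisfies exactly ν ∫_{x²+y²≤R²} ω(√(x²+y²))² dx dy = (α Γ²/(4π)) (1 − e^{−α R²/ν}); in particular this quantity tends to α Γ²/(4π) as ν → 0⁺ (finite anomalous dissipation in the inviscid limit). -/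
noncomputable section

open MeasureTheory Filter Set
open scoped RealInnerProductSpace Topology

/-!
The Burgers vortex is the curl-free strain `(-αx, -αy, 2αz)` plus the swirl `h(r²)·(-y, x, 0)`,
where `h(s) = F(s)/s` and `F(s) = (Γ/2π)(1 - e^{-αs/(2ν)})` is the circulation around the circle
of radius `√s`, divided by `2π`. The swirl has axial vorticity `2 (s h(s))' = 2 F'(s)`, which is the
Gaussian `ω`. Writing `h = dslope F 0` makes `h` differentiable on the axis too, because `F` is
analytic at `0`; the value of `g` at `r = 0` is exactly `F'(0)`.

The dissipation integrand is radial, so polar coordinates reduce it to `2π ∫₀^R r e^{-αr²/ν} dr`,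
which has an explicit antiderivative; the inviscid limit is `e^{-αR²/ν} → 0`.
-/

open Real

section DSlope

variable {𝕜 E : Type*} [NontriviallyNormedField 𝕜] [NormedAddCommGroup E] [NormedSpace 𝕜 E]
  {f : 𝕜 → E} {a b : 𝕜}

theorem AnalyticAt.differentiableAt_dslope (hf : AnalyticAt 𝕜 f a) (hb : DifferentiableAt 𝕜 f b) :
    DifferentiableAt 𝕜 (dslope f a) b := by
  rcases eq_or_ne b a with rfl | hba
  · obtain ⟨_, hp⟩ := hf
    exact hp.has_fpower_series_dslope_fslope.differentiableAt
  · exact (differentiableAt_dslope_of_ne hba).2 hb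

theorem deriv_mul_dslope_zero (f : 𝕜 → 𝕜) (b : 𝕜) :
    deriv (fun x => x * dslope f 0 x) b = deriv f b := by
  have : (fun x => x * dslope f 0 x) = fun x => f x - f 0 :=
    funext fun x => by simpa using sub_smul_dslope f 0 x
  rw [this, deriv_sub_const]

end DSlope

theorem curl3_mk3 {f₀ f₁ f₂ : E3 → ℝ} {L₀ L₁ L₂ : E3 →L[ℝ] ℝ} {p : E3}
    (h₀ : HasFDerivAt f₀ L₀ p) (h₁ : HasFDerivAt f₁ L₁ p) (h₂ : HasFDerivAt f₂ L₂ p) :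
    curl3 (fun q => mk3 (f₀ q) (f₁ q) (f₂ q)) p =
      mk3 (L₂ (e3 1) - L₁ (e3 2)) (L₀ (e3 2) - L₂ (e3 0)) (L₁ (e3 0) - L₀ (e3 1)) := by
  have hpi :
      HasFDerivAt (fun q => ![f₀ q, f₁ q, f₂ q]) (ContinuousLinearMap.pi ![L₀, L₁, L₂]) p := by
    refine hasFDerivAt_pi.2 fun i => ?_
    fin_cases i <;> assumption
  have h : HasFDerivAt (fun q => mk3 (f₀ q) (f₁ q) (f₂ q))
      (((EuclideanSpace.equiv (Fin 3) ℝ).symm : (Fin 3 → ℝ) →L[ℝ] E3).comp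
        (ContinuousLinearMap.pi ![L₀, L₁, L₂])) p :=
    ((EuclideanSpace.equiv (Fin 3) ℝ).symm : (Fin 3 → ℝ) →L[ℝ] E3).hasFDerivAt.comp p hpi
  simp only [curl3, pder, h.fderiv]
  rfl

def strainedVortex (α : ℝ) (h : ℝ → ℝ) (q : E3) : E3 :=
  mk3 (-(α * q 0) - h (q 0 ^ 2 + q 1 ^ 2) * q 1) (-(α * q 1) + h (q 0 ^ 2 + q 1 ^ 2) * q 0)
    (2 * α * q 2)

theorem curl3_strainedVortex (α : ℝ) {h : ℝ → ℝ} {p : E3}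
    (hh : DifferentiableAt ℝ h (p 0 ^ 2 + p 1 ^ 2)) :
    curl3 (strainedVortex α h) p = mk3 0 0 (2 * deriv (fun s => s * h s) (p 0 ^ 2 + p 1 ^ 2)) := by
  have hx (i : Fin 3) : HasFDerivAt (𝕜 := ℝ) (fun q : E3 => q i) (EuclideanSpace.proj i) p :=
    (EuclideanSpace.proj (𝕜 := ℝ) i).hasFDerivAt
  have hs : HasFDerivAt (fun q : E3 => h (q 0 ^ 2 + q 1 ^ 2)) _ p :=
    hh.hasDerivAt.comp_hasFDerivAt p (((hx 0).pow 2).add ((hx 1).pow 2))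
  rw [deriv_fun_mul differentiableAt_fun_id hh, deriv_id'']
  refine (curl3_mk3 (((hx 0).const_mul α).neg.sub (hs.mul (hx 1)))
    (((hx 1).const_mul α).neg.add (hs.mul (hx 0))) ((hx 2).const_mul (2 * α))).trans ?_
  simp only [e3, smul_apply, add_apply, sub_apply, neg_apply, PiLp.proj_apply, smul_eq_mul,
    PiLp.single_eq_same, PiLp.single_eq_of_ne, ne_eq, Fin.reduceEq, not_false_eq_true, mul_zero,
    neg_zero, zero_add, zero_sub]
  congr 1
  ring

theorem integral_disk_comp_sq_add_sq (f : ℝ → ℝ) {R : ℝ} (hR : 0 ≤ R) :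
    ∫ x in {x : ℝ × ℝ | x.1 ^ 2 + x.2 ^ 2 ≤ R ^ 2}, f (x.1 ^ 2 + x.2 ^ 2) =
      2 * π * ∫ r in (0)..R, r * f (r ^ 2) := by
  have hdisk : MeasurableSet {x : ℝ × ℝ | x.1 ^ 2 + x.2 ^ 2 ≤ R ^ 2} :=
    measurableSet_le (by fun_prop) measurable_const
  have hpolar : ∀ p : ℝ × ℝ,
      (polarCoord.symm p).1 ^ 2 + (polarCoord.symm p).2 ^ 2 = p.1 ^ 2 := fun p => by
    simp only [polarCoord_symm_apply]
    linear_combination p.1 ^ 2 * cos_sq_add_sin_sq p.2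
  have htarget : ∀ p ∈ polarCoord.target,
      p.1 • {x : ℝ × ℝ | x.1 ^ 2 + x.2 ^ 2 ≤ R ^ 2}.indicator
        (fun x => f (x.1 ^ 2 + x.2 ^ 2)) (polarCoord.symm p) =
      {p : ℝ × ℝ | p.1 ≤ R}.indicator (fun p => p.1 * f (p.1 ^ 2) * 1) p := by
    rintro p ⟨hp, -⟩
    have : p.1 ^ 2 ≤ R ^ 2 ↔ p.1 ≤ R := pow_le_pow_iff_left₀ (le_of_lt hp) hR two_ne_zero
    simp only [indicator_apply, mem_ofPred_eq, hpolar, this, smul_eq_mul]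
    split_ifs <;> simp
  have hset : polarCoord.target ∩ {p : ℝ × ℝ | p.1 ≤ R} = Ioc 0 R ×ˢ Ioo (-π) π := by
    ext ⟨r, θ⟩
    simp only [polarCoord_target, mem_inter_iff, mem_prod, mem_Ioi, mem_ofPred_eq, mem_Ioc]
    tauto
  calc ∫ x in {x : ℝ × ℝ | x.1 ^ 2 + x.2 ^ 2 ≤ R ^ 2}, f (x.1 ^ 2 + x.2 ^ 2)
      = ∫ p in polarCoord.target, p.1 • {x : ℝ × ℝ | x.1 ^ 2 + x.2 ^ 2 ≤ R ^ 2}.indicator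
          (fun x => f (x.1 ^ 2 + x.2 ^ 2)) (polarCoord.symm p) := by
        rw [integral_comp_polarCoord_symm, integral_indicator hdisk]
    _ = ∫ p in Ioc 0 R ×ˢ Ioo (-π) π, p.1 * f (p.1 ^ 2) * 1 := by
        rw [setIntegral_congr_fun polarCoord.open_target.measurableSet htarget,
          setIntegral_indicator (measurableSet_le measurable_fst measurable_const), hset]
    _ = 2 * π * ∫ r in (0)..R, r * f (r ^ 2) := by
        rw [Measure.volume_eq_prod, setIntegral_prod_mul (fun r => r * f (r ^ 2)) (fun _ => 1),
          intervalIntegral.integral_of_le hR]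
        simp only [setIntegral_const, Real.volume_real_Ioo, smul_eq_mul, mul_one]
        rw [max_eq_left (by linarith [pi_pos])]
        ring

theorem intervalIntegral_mul_exp_neg_mul_sq {a : ℝ} (ha : a ≠ 0) (R : ℝ) :
    ∫ r in (0)..R, r * exp (-(a * r ^ 2)) = (1 - exp (-(a * R ^ 2))) / (2 * a) := by
  have hderiv (r : ℝ) :
      HasDerivAt (fun r => -exp (-(a * r ^ 2)) / (2 * a)) (r * exp (-(a * r ^ 2))) r := by
    refine (((hasDerivAt_pow 2 r).const_mul a).neg.exp.neg.div_const (2 * a)).congr_deriv ?_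
    simp only [Pi.neg_apply]
    field_simp
    ring
  rw [intervalIntegral.integral_eq_sub_of_hasDerivAt (fun r _ => hderiv r)
    ((by fun_prop : Continuous fun r => r * exp (-(a * r ^ 2))).intervalIntegrable _ _)]
  rw [zero_pow two_ne_zero, mul_zero, neg_zero, exp_zero]
  ring

theorem tendsto_exp_neg_div_nhdsGT_zero {c : ℝ} (hc : 0 < c) :
    Tendsto (fun t => exp (-c / t)) (𝓝[>] 0) (𝓝 0) := by
  have : Tendsto (fun t => -c / t) (𝓝[>] 0) atBot := by
    simp_rw [div_eq_mul_inv]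
    exact tendsto_inv_nhdsGT_zero.const_mul_atTop_of_neg (neg_neg_of_pos hc)
  exact tendsto_exp_atBot.comp this

def burgersCirculation (c K s : ℝ) : ℝ := K * (1 - exp (-(c * s)))

theorem hasDerivAt_burgersCirculation (c K s : ℝ) :
    HasDerivAt (burgersCirculation c K) (K * c * exp (-(c * s))) s := by
  refine (((hasDerivAt_id s).const_mul c).neg.exp.const_sub 1).const_mul K |>.congr_deriv ?_
  simp only [id, Pi.neg_apply]
  ring

theorem analyticAt_burgersCirculation (c K s : ℝ) : AnalyticAt ℝ (burgersCirculation c K) s := by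
  unfold burgersCirculation
  fun_prop

theorem dslope_burgersCirculation (c K s : ℝ) :
    dslope (burgersCirculation c K) 0 s =
      if s = 0 then K * c else K * (1 - exp (-(c * s))) / s := by
  split_ifs with hs
  · rw [hs, dslope_same, (hasDerivAt_burgersCirculation c K 0).deriv]
    simp
  · rw [dslope_of_ne _ hs, slope_def_field]
    simp [burgersCirculation]

/-- For the Burgers vortex `v` with `ν > 0`, `α > 0`, circulation `Γ`:
(a) its vorticity is `curl v = (0, 0, ω(r))` with `ω(r) = (αΓ/(2πν)) e^{−αr²/(2ν)}`;
(b) for every `R > 0` the dissipation over the disk of radius `R` per unit length equals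
`ν ∫_{x²+y²≤R²} ω² = (αΓ²/(4π))(1 − e^{−αR²/ν})`, and this quantity tends to the finite
anomalous dissipation `αΓ²/(4π)` in the inviscid limit `ν → 0⁺`. -/
theorem statement15
    (ν α Γ : ℝ) (hν : 0 < ν) (hα : 0 < α)
    (g : ℝ → ℝ)
    (hg : ∀ r : ℝ, g r =
      if r = 0 then Γ * α / (4 * Real.pi * ν)
      else Γ * (1 - Real.exp (-(α * r ^ 2) / (2 * ν))) / (2 * Real.pi * r ^ 2))
    (v : E3 → E3)
    (hv : ∀ p : E3, v p =
      mk3 (-(α * p 0) - g (Real.sqrt ((p 0) ^ 2 + (p 1) ^ 2)) * p 1)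
          (-(α * p 1) + g (Real.sqrt ((p 0) ^ 2 + (p 1) ^ 2)) * p 0)
          (2 * α * p 2))
    (ω : ℝ → ℝ)
    (hω : ∀ r : ℝ, ω r = (α * Γ / (2 * Real.pi * ν)) * Real.exp (-(α * r ^ 2) / (2 * ν))) :
    (∀ p : E3, curl3 v p = mk3 0 0 (ω (Real.sqrt ((p 0) ^ 2 + (p 1) ^ 2)))) ∧
    (∀ R : ℝ, 0 < R →
      ν * (∫ x in {x : ℝ × ℝ | x.1 ^ 2 + x.2 ^ 2 ≤ R ^ 2},
            (ω (Real.sqrt (x.1 ^ 2 + x.2 ^ 2))) ^ 2) =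
        α * Γ ^ 2 / (4 * Real.pi) * (1 - Real.exp (-(α * R ^ 2) / ν))) ∧
    (∀ R : ℝ, 0 < R →
      Filter.Tendsto
        (fun t : ℝ => α * Γ ^ 2 / (4 * Real.pi) * (1 - Real.exp (-(α * R ^ 2) / t)))
        (𝓝[>] (0:ℝ)) (𝓝 (α * Γ ^ 2 / (4 * Real.pi)))) := by
  set F := burgersCirculation (α / (2 * ν)) (Γ / (2 * π))
  have hgF (x y : ℝ) : g √(x ^ 2 + y ^ 2) = dslope F 0 (x ^ 2 + y ^ 2) := by
    have hs : 0 ≤ x ^ 2 + y ^ 2 := by positivity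
    rw [hg, dslope_burgersCirculation, sq_sqrt hs]
    simp only [sqrt_eq_zero hs]
    split_ifs
    · field_simp
      ring
    · field_simp
  have hv' : v = strainedVortex α (dslope F 0) := funext fun p => by rw [hv, hgF]; rfl
  have hdiff (s : ℝ) : DifferentiableAt ℝ (dslope F 0) s :=
    (analyticAt_burgersCirculation _ _ 0).differentiableAt_dslope
      (hasDerivAt_burgersCirculation _ _ s).differentiableAt
  refine ⟨fun p => ?_, fun R hR => ?_, fun R hR => ?_⟩
  · rw [hv', curl3_strainedVortex α (hdiff _), deriv_mul_dslope_zero,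
      (hasDerivAt_burgersCirculation _ _ _).deriv, hω, sq_sqrt (by positivity)]
    congr 1
    field_simp
  · have hω2 (r : ℝ) : r * ω √(r ^ 2) ^ 2 =
        (α * Γ / (2 * π * ν)) ^ 2 * (r * exp (-(α / ν * r ^ 2))) := by
      rw [hω, sq_sqrt (sq_nonneg r), mul_pow, ← exp_nat_mul,
        show ((2 : ℕ) : ℝ) * (-(α * r ^ 2) / (2 * ν)) = -(α / ν * r ^ 2) by field_simp; ring]
      ring
    rw [integral_disk_comp_sq_add_sq (fun s => ω √s ^ 2) hR.le]
    simp only [hω2, intervalIntegral.integral_const_mul,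
      intervalIntegral_mul_exp_neg_mul_sq (div_pos hα hν).ne']
    rw [show -(α / ν * R ^ 2) = -(α * R ^ 2) / ν by ring]
    field_simp
    ring
  · simpa using ((tendsto_exp_neg_div_nhdsGT_zero (by positivity)).const_sub 1).const_mul
      (α * Γ ^ 2 / (4 * π))
end
end

section
/- Let a, b, d, Γ ∈ ℝ with c := a + b > 0, and let R > 0. For ν > 0 define g_ν(r) = Γ(1 − e^{−c r²/(4ν)})/(2π r²) (extended by its limit at r = 0) and the planar velocity profile v_ν(x, y) = (−a x − g_ν(r) y, −b y + g_ν(r) x, d) with r = √(x² + y²). Then the regularized core energy has a finite inviscid limit: lim_{ν→0⁺} [ (1/2) ∫_{x²+y²≤R²} |v_ν(x, y)|² dx dy − (Γ²/(8π)) ( γ_EM + log(c R²/(8ν)) ) ] = π R² d²/2 + π R⁴ (a² + b²)/8, where γ_EM denotes the Euler–Mascheroni constant. In particular, the kinetic energy of the vortex core diverges logarithmically as ν → 0⁺ with coefficient Γ²/(8π) (the anomalous term in the Hamiltonian). -/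
/-!
In polar coordinates the angular integral separates the strain from the swirl: what remains of
`∫ |v_ν|²` is a polynomial in `R` plus `2π ∫₀ᴿ r³ g_ν(r)² dr`. Writing `g_ν` through
`ψ(s) = (1 - e^{-s}) / s`, the identity `s ψ(s)² = 2ψ(s) - 2ψ(2s)` turns the swirl term into
`Γ²/(4π) (2 Ein T - Ein (2T))` with `T = cR²/(4ν)` and `Ein T = ∫₀ᵀ ψ`, the entire exponential
integral. The regularized energy therefore converges because `Ein T - log T → γ`: at integers,
`Ein n - H_n = ∫₀¹ ((1 - t)ⁿ - e^{-nt}) / t dt → 0` by dominated convergence, and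
`Ein T - log T` is antitone in `T`.
-/

noncomputable section

open MeasureTheory Filter Set
open scoped RealInnerProductSpace Topology

namespace BurgersVortex

open Real

def einIntegrand : ℝ → ℝ := dslope (fun s => 1 - exp (-s)) 0

lemma hasDerivAt_one_sub_exp_neg (s : ℝ) :
    HasDerivAt (fun s => 1 - exp (-s)) (exp (-s)) s := by
  simpa using ((hasDerivAt_neg s).exp).const_sub 1

lemma einIntegrand_zero : einIntegrand 0 = 1 := by
  simp [einIntegrand, dslope_same, (hasDerivAt_one_sub_exp_neg 0).deriv]

lemma einIntegrand_of_ne {s : ℝ} (hs : s ≠ 0) : einIntegrand s = (1 - exp (-s)) / s := by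
  simp [einIntegrand, dslope_of_ne _ hs, slope_def_field]

@[fun_prop]
lemma continuous_einIntegrand : Continuous einIntegrand := by
  rw [← continuousOn_univ, einIntegrand, continuousOn_dslope univ_mem]
  exact ⟨by fun_prop, (hasDerivAt_one_sub_exp_neg 0).differentiableAt⟩

lemma einIntegrand_sq_mul_self (s : ℝ) :
    einIntegrand s ^ 2 * s = 2 * einIntegrand s - 2 * einIntegrand (2 * s) := by
  rcases eq_or_ne s 0 with rfl | hs
  · simp [einIntegrand_zero]
  have hexp : exp (-(2 * s)) = exp (-s) ^ 2 := by rw [← exp_nat_mul]; ring_nf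
  rw [einIntegrand_of_ne hs, einIntegrand_of_ne (mul_ne_zero two_ne_zero hs), hexp]
  field_simp
  ring

/-- The entire exponential integral: `Ein T = E₁ T + log T + γ`. -/
def ein (T : ℝ) : ℝ := ∫ s in 0..T, einIntegrand s

lemma hasDerivAt_ein (T : ℝ) : HasDerivAt ein (einIntegrand T) T :=
  (continuous_einIntegrand.integral_hasStrictDerivAt 0 T).hasDerivAt

lemma antitoneOn_ein_sub_log : AntitoneOn (fun T => ein T - log T) (Ioi 0) := by
  have hderiv : ∀ T ∈ Ioi (0 : ℝ),
      HasDerivAt (fun T => ein T - log T) (-exp (-T) / T) T := fun T hT => by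
    refine ((hasDerivAt_ein T).sub (hasDerivAt_log (ne_of_gt hT))).congr_deriv ?_
    rw [einIntegrand_of_ne (ne_of_gt hT)]
    ring
  refine antitoneOn_of_hasDerivWithinAt_nonpos (convex_Ioi 0)
    (fun T hT => (hderiv T hT).continuousAt.continuousWithinAt)
    (fun T hT => (hderiv T (interior_subset hT)).hasDerivWithinAt) fun T hT => ?_
  rw [interior_Ioi] at hT
  exact div_nonpos_of_nonpos_of_nonneg (neg_nonpos.2 (exp_pos _).le) (le_of_lt hT)

lemma integral_mul_einIntegrand_mul_sq (κ R : ℝ) :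
    ∫ r in 0..R, 2 * κ * r * einIntegrand (κ * r ^ 2) = ein (κ * R ^ 2) := by
  have hderiv : ∀ r ∈ uIcc 0 R, HasDerivAt (fun r => κ * r ^ 2) (2 * κ * r) r := fun r _ => by
    simpa [mul_comm, mul_left_comm] using (hasDerivAt_pow 2 r).const_mul κ
  have := intervalIntegral.integral_comp_mul_deriv hderiv (by fun_prop) continuous_einIntegrand
  simp only [Function.comp_apply, ne_eq, OfNat.ofNat_ne_zero, not_false_eq_true, zero_pow,
    mul_zero] at this
  rw [ein, ← this]
  congr 1
  ext r
  ring

lemma harmonic_eq_integral_geom_sum (n : ℕ) :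
    (harmonic n : ℝ) = ∫ t in 0..1, ∑ k ∈ Finset.range n, (1 - t) ^ k := by
  rw [intervalIntegral.integral_finsetSum fun k _ =>
    Continuous.intervalIntegrable (by fun_prop) _ _, harmonic]
  push_cast
  refine Finset.sum_congr rfl fun k _ => ?_
  rw [intervalIntegral.integral_comp_sub_left (fun x : ℝ => x ^ k) 1]
  norm_num [integral_pow]

lemma mul_einIntegrand_mul_sub_geom_sum (n : ℕ) (t : ℝ) :
    n * einIntegrand (n * t) - ∑ k ∈ Finset.range n, (1 - t) ^ k
      = ((1 - t) ^ n - exp (-(n * t))) / t := by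
  rcases eq_or_ne t 0 with rfl | ht
  · simp [einIntegrand_zero]
  rcases eq_or_ne n 0 with rfl | hn
  · simp
  have hsum : ∑ k ∈ Finset.range n, (1 - t) ^ k = (1 - (1 - t) ^ n) / t := by
    rw [eq_div_iff ht]
    linear_combination -(geom_sum_mul (1 - t) n)
  rw [hsum, einIntegrand_of_ne (mul_ne_zero (Nat.cast_ne_zero.2 hn) ht)]
  field_simp
  ring

lemma ein_natCast_sub_harmonic (n : ℕ) :
    ein n - harmonic n = ∫ t in 0..1, ((1 - t) ^ n - exp (-(n * t))) / t := by
  have hscale : ∫ t in 0..1, n * einIntegrand (n * t) = ein n := by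
    rcases eq_or_ne n 0 with rfl | hn
    · simp [ein]
    rw [intervalIntegral.integral_const_mul, intervalIntegral.integral_comp_mul_left _
      (Nat.cast_ne_zero.2 hn), smul_eq_mul, mul_inv_cancel_left₀ (Nat.cast_ne_zero.2 hn),
      mul_zero, mul_one, ein]
  simp_rw [← mul_einIntegrand_mul_sub_geom_sum]
  rw [intervalIntegral.integral_sub
    (Continuous.intervalIntegrable (by fun_prop) _ _)
    (Continuous.intervalIntegrable (by fun_prop) _ _),
    hscale, harmonic_eq_integral_geom_sum]

lemma exp_neg_natCast_mul (n : ℕ) (t : ℝ) : exp (-(n * t)) = exp (-t) ^ n := by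
  rw [← exp_nat_mul, mul_neg]

lemma mul_exp_neg_le_one (u : ℝ) : u * exp (-u) ≤ 1 := by
  rw [exp_neg, mul_inv_le_iff₀ (exp_pos u)]
  linarith [add_one_le_exp u]

lemma abs_one_sub_pow_sub_exp_le (n : ℕ) {t : ℝ} (ht0 : 0 ≤ t) (ht1 : t ≤ 1) :
    |(1 - t) ^ n - exp (-(n * t))| ≤ 2 * t := by
  obtain _ | m := n
  · simp [ht0]
  have hy : 0 ≤ 1 - t := by linarith
  have hyx : 1 - t ≤ exp (-t) := by linarith [add_one_le_exp (-t)]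
  have hxy : exp (-t) - (1 - t) ≤ t ^ 2 := by
    have := abs_exp_sub_one_sub_id_le (x := -t) (by rwa [abs_neg, abs_of_nonneg ht0])
    rw [neg_sq] at this
    linarith [le_abs_self (exp (-t) - 1 - -t)]
  have hm : (m + 1 : ℝ) * t * exp (-t) ^ m ≤ 2 := by
    rw [← exp_neg_natCast_mul]
    nlinarith [mul_exp_neg_le_one (m * t), exp_pos (-(m * t)), exp_le_one_iff.2
      (neg_nonpos.2 (mul_nonneg m.cast_nonneg ht0))]
  calc |(1 - t) ^ (m + 1) - exp (-((m + 1 : ℕ) * t))|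
      ≤ |1 - t - exp (-t)| * (m + 1 : ℕ) * max |1 - t| |exp (-t)| ^ m := by
        rw [exp_neg_natCast_mul]; exact abs_pow_sub_pow_le ..
    _ = (exp (-t) - (1 - t)) * (m + 1) * exp (-t) ^ m := by
        rw [abs_sub_comm, abs_of_nonneg (by linarith), abs_of_nonneg hy,
          abs_of_pos (exp_pos _), max_eq_right hyx]
        push_cast; ring
    _ ≤ t ^ 2 * (m + 1) * exp (-t) ^ m := by gcongr
    _ ≤ 2 * t := by nlinarith
lemma tendsto_ein_natCast_sub_harmonic :
    Tendsto (fun n : ℕ => ein n - harmonic n) atTop (𝓝 0) := by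
  simp_rw [ein_natCast_sub_harmonic]
  have hlim := intervalIntegral.tendsto_integral_filter_of_dominated_convergence (a := 0) (b := 1)
    (F := fun (n : ℕ) t => ((1 - t) ^ n - exp (-(n * t))) / t) (f := fun _ => 0)
    (bound := fun _ => 2) (μ := volume) (l := atTop) ?_ ?_ intervalIntegrable_const ?_
  · simpa using hlim
  · exact Eventually.of_forall fun n => (by fun_prop : Measurable _).aestronglyMeasurable
  · refine Eventually.of_forall fun n => ae_of_all _ fun t ht => ?_
    rw [uIoc_of_le zero_le_one] at ht
    rw [norm_div, Real.norm_eq_abs, Real.norm_of_nonneg ht.1.le, div_le_iff₀ ht.1]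
    exact abs_one_sub_pow_sub_exp_le n ht.1.le ht.2
  · refine ae_of_all _ fun t ht => ?_
    rw [uIoc_of_le zero_le_one] at ht
    simp_rw [exp_neg_natCast_mul]
    have hx : |exp (-t)| < 1 := by
      rw [abs_of_pos (exp_pos _)]; exact exp_lt_one_iff.2 (by linarith [ht.1])
    have hy : |1 - t| < 1 := abs_lt.2 ⟨by linarith [ht.2], by linarith [ht.1]⟩
    simpa using ((tendsto_pow_atTop_nhds_zero_of_abs_lt_one hy).sub
      (tendsto_pow_atTop_nhds_zero_of_abs_lt_one hx)).div_const t

lemma tendsto_ein_natCast_sub_log :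
    Tendsto (fun n : ℕ => ein n - log n) atTop (𝓝 eulerMascheroniConstant) := by
  simpa using tendsto_ein_natCast_sub_harmonic.add tendsto_harmonic_sub_log

lemma tendsto_ein_sub_log :
    Tendsto (fun T => ein T - log T) atTop (𝓝 eulerMascheroniConstant) := by
  have hfloor := tendsto_ein_natCast_sub_log.comp (tendsto_nat_floor_atTop (α := ℝ))
  have hfloor_succ := (tendsto_ein_natCast_sub_log.comp (tendsto_add_atTop_nat 1)).comp
    (tendsto_nat_floor_atTop (α := ℝ))
  refine tendsto_of_tendsto_of_tendsto_of_le_of_le' hfloor_succ hfloor ?_ ?_ <;>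
    filter_upwards [eventually_ge_atTop (1 : ℝ)] with T hT
  · exact antitoneOn_ein_sub_log (mem_Ioi.2 (by linarith)) (by simp; positivity)
      (by exact_mod_cast (Nat.lt_floor_add_one T).le)
  · exact antitoneOn_ein_sub_log (by simpa using Nat.floor_pos.2 hT) (mem_Ioi.2 (by linarith))
      (Nat.floor_le (by linarith))

lemma tendsto_two_mul_ein_sub_ein_two_mul_sub_log :
    Tendsto (fun T => 2 * ein T - ein (2 * T) - log (T / 2)) atTop
      (𝓝 eulerMascheroniConstant) := by
  have h := (tendsto_ein_sub_log.const_mul 2).sub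
    (tendsto_ein_sub_log.comp (tendsto_id.const_mul_atTop two_pos))
  rw [show 2 * eulerMascheroniConstant - eulerMascheroniConstant = eulerMascheroniConstant by
    ring] at h
  refine h.congr' ?_
  filter_upwards [eventually_gt_atTop 0] with T hT
  simp only [Function.comp_apply, id]
  rw [log_div hT.ne' two_ne_zero, log_mul two_ne_zero hT.ne']
  ring

lemma integral_disk_eq_integral_polar {E : Type*} [NormedAddCommGroup E] [NormedSpace ℝ E]
    {f : ℝ × ℝ → E} (hf : Continuous f) {R : ℝ} (hR : 0 ≤ R) :
    ∫ x in {x : ℝ × ℝ | x.1 ^ 2 + x.2 ^ 2 ≤ R ^ 2}, f x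
      = ∫ r in 0..R, r • ∫ θ in -π..π, f (r * cos θ, r * sin θ) := by
  set S := {x : ℝ × ℝ | x.1 ^ 2 + x.2 ^ 2 ≤ R ^ 2}
  set F : ℝ × ℝ → E := fun p => p.1 • f (polarCoord.symm p)
  have hS : MeasurableSet S := (isClosed_le (by fun_prop) continuous_const).measurableSet
  have hmem : ∀ p ∈ polarCoord.target, polarCoord.symm p ∈ S ↔ p ∈ Ioc 0 R ×ˢ univ := by
    rintro ⟨r, θ⟩ ⟨hr, -⟩
    have hr : 0 < r := hr
    have hsq : (r * cos θ) ^ 2 + (r * sin θ) ^ 2 = r ^ 2 := by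
      linear_combination r ^ 2 * sin_sq_add_cos_sq θ
    simp [S, polarCoord_symm_apply, hsq, hr, pow_le_pow_iff_left₀ hr.le hR]
  have hint : IntegrableOn F (Ioc 0 R ×ˢ Ioo (-π) π) (volume.prod volume) :=
    ((by fun_prop : Continuous F).continuousOn.integrableOn_compact
      (isCompact_Icc.prod isCompact_Icc)).mono_set
      (prod_mono Ioc_subset_Icc_self Ioo_subset_Icc_self)
  calc ∫ x in S, f x = ∫ p in polarCoord.target, p.1 • S.indicator f (polarCoord.symm p) := by
        rw [← integral_indicator hS, integral_comp_polarCoord_symm]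
    _ = ∫ p in polarCoord.target, (Ioc 0 R ×ˢ univ).indicator F p := by
        refine setIntegral_congr_fun polarCoord.open_target.measurableSet fun p hp => ?_
        by_cases h : polarCoord.symm p ∈ S
        · rw [indicator_of_mem h, indicator_of_mem ((hmem p hp).1 h)]
        · rw [indicator_of_notMem h, indicator_of_notMem (mt (hmem p hp).2 h), smul_zero]
    _ = ∫ p in Ioc 0 R ×ˢ Ioo (-π) π, F p := by
        rw [setIntegral_indicator (measurableSet_Ioc.prod MeasurableSet.univ), polarCoord_target,
          prod_inter_prod, inter_eq_right.2 Ioc_subset_Ioi_self, inter_univ]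
    _ = ∫ r in Ioc 0 R, ∫ θ in Ioo (-π) π, F (r, θ) := by
        rw [Measure.volume_eq_prod, setIntegral_prod F hint]
    _ = ∫ r in 0..R, r • ∫ θ in -π..π, f (r * cos θ, r * sin θ) := by
        rw [intervalIntegral.integral_of_le hR]
        refine setIntegral_congr_fun measurableSet_Ioc fun r _ => ?_
        rw [intervalIntegral.integral_of_le (by linarith [pi_pos]),
          ← integral_Ioc_eq_integral_Ioo, ← integral_smul]
        rfl

lemma integral_trigonometric_quadratic (p q s t : ℝ) :
    ∫ θ in -π..π, (p * cos θ ^ 2 + q * sin θ ^ 2 + s * (sin θ * cos θ) + t)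
      = π * (p + q) + 2 * π * t := by
  have hcos : IntervalIntegrable (fun θ => p * cos θ ^ 2) volume (-π) π :=
    Continuous.intervalIntegrable (by fun_prop) _ _
  have hsin : IntervalIntegrable (fun θ => q * sin θ ^ 2) volume (-π) π :=
    Continuous.intervalIntegrable (by fun_prop) _ _
  have hsincos : IntervalIntegrable (fun θ => s * (sin θ * cos θ)) volume (-π) π :=
    Continuous.intervalIntegrable (by fun_prop) _ _
  rw [intervalIntegral.integral_add ((hcos.add hsin).add hsincos) intervalIntegrable_const,
    intervalIntegral.integral_add (hcos.add hsin) hsincos,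
    intervalIntegral.integral_add hcos hsin, intervalIntegral.integral_const_mul,
    intervalIntegral.integral_const_mul, intervalIntegral.integral_const_mul,
    integral_cos_sq, integral_sin_sq, integral_sin_mul_cos₁, intervalIntegral.integral_const]
  simp
  ring

lemma norm_mk3_sq (p q r : ℝ) : ‖mk3 p q r‖ ^ 2 = p ^ 2 + q ^ 2 + r ^ 2 := by
  rw [EuclideanSpace.norm_eq, sq_sqrt (by positivity), Fin.sum_univ_three]
  simp [mk3]

def strainedVortexVelocity (a b d : ℝ) (h : ℝ → ℝ) (x : ℝ × ℝ) : E3 :=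
  mk3 (-(a * x.1) - h √(x.1 ^ 2 + x.2 ^ 2) * x.2) (-(b * x.2) + h √(x.1 ^ 2 + x.2 ^ 2) * x.1) d

lemma norm_strainedVortexVelocity_sq (a b d : ℝ) (h : ℝ → ℝ) (x : ℝ × ℝ) :
    ‖strainedVortexVelocity a b d h x‖ ^ 2
      = (a * x.1 + h √(x.1 ^ 2 + x.2 ^ 2) * x.2) ^ 2
        + (b * x.2 - h √(x.1 ^ 2 + x.2 ^ 2) * x.1) ^ 2 + d ^ 2 := by
  rw [strainedVortexVelocity, norm_mk3_sq]
  ring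

lemma norm_strainedVortexVelocity_polar_sq (a b d : ℝ) (h : ℝ → ℝ) {r : ℝ} (hr : 0 ≤ r)
    (θ : ℝ) :
    ‖strainedVortexVelocity a b d h (r * cos θ, r * sin θ)‖ ^ 2
      = r ^ 2 * (a ^ 2 + h r ^ 2) * cos θ ^ 2 + r ^ 2 * (b ^ 2 + h r ^ 2) * sin θ ^ 2
        + 2 * r ^ 2 * h r * (a - b) * (sin θ * cos θ) + d ^ 2 := by
  have hsq : (r * cos θ) ^ 2 + (r * sin θ) ^ 2 = r ^ 2 := by
    linear_combination r ^ 2 * sin_sq_add_cos_sq θ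
  rw [norm_strainedVortexVelocity_sq]
  simp only [hsq, sqrt_sq hr]
  ring

lemma integral_disk_norm_strainedVortexVelocity_sq (a b d : ℝ) {h : ℝ → ℝ} (hh : Continuous h)
    {R : ℝ} (hR : 0 ≤ R) :
    ∫ x in {x : ℝ × ℝ | x.1 ^ 2 + x.2 ^ 2 ≤ R ^ 2}, ‖strainedVortexVelocity a b d h x‖ ^ 2
      = π * (a ^ 2 + b ^ 2) * R ^ 4 / 4 + π * d ^ 2 * R ^ 2
        + 2 * π * ∫ r in 0..R, r ^ 3 * h r ^ 2 := by
  have hcont : Continuous fun x => ‖strainedVortexVelocity a b d h x‖ ^ 2 := by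
    simp_rw [norm_strainedVortexVelocity_sq]
    fun_prop
  have hangular : ∀ r ∈ uIcc 0 R,
      r • ∫ θ in -π..π, ‖strainedVortexVelocity a b d h (r * cos θ, r * sin θ)‖ ^ 2
        = (π * (a ^ 2 + b ^ 2) * r ^ 3 + 2 * π * d ^ 2 * r) + 2 * π * (r ^ 3 * h r ^ 2) := by
    intro r hr
    rw [uIcc_of_le hR] at hr
    simp_rw [norm_strainedVortexVelocity_polar_sq a b d h hr.1, integral_trigonometric_quadratic]
    rw [smul_eq_mul]
    ring
  rw [integral_disk_eq_integral_polar hcont hR, intervalIntegral.integral_congr hangular,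
    intervalIntegral.integral_add (Continuous.intervalIntegrable (by fun_prop) _ _)
      (Continuous.intervalIntegrable (by fun_prop) _ _),
    intervalIntegral.integral_add (Continuous.intervalIntegrable (by fun_prop) _ _)
      (Continuous.intervalIntegrable (by fun_prop) _ _),
    intervalIntegral.integral_const_mul, intervalIntegral.integral_const_mul,
    intervalIntegral.integral_const_mul, integral_pow, integral_id]
  ring


def burgersSwirl (Γ κ r : ℝ) : ℝ := Γ * κ / (2 * π) * einIntegrand (κ * r ^ 2)

@[fun_prop]
lemma continuous_burgersSwirl (Γ κ : ℝ) : Continuous (burgersSwirl Γ κ) := by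
  unfold burgersSwirl
  fun_prop

lemma burgersSwirl_eq_ite (Γ : ℝ) {c ν : ℝ} (hc : c ≠ 0) (hν : ν ≠ 0) (r : ℝ) :
    burgersSwirl Γ (c / (4 * ν)) r =
      if r = 0 then Γ * c / (8 * π * ν)
      else Γ * (1 - exp (-(c * r ^ 2) / (4 * ν))) / (2 * π * r ^ 2) := by
  split_ifs with hr
  · rw [burgersSwirl, hr]
    simp only [ne_eq, OfNat.ofNat_ne_zero, not_false_eq_true, zero_pow, mul_zero,
      einIntegrand_zero, mul_one]
    field_simp
    ring
  · have hκr : c / (4 * ν) * r ^ 2 ≠ 0 := by positivity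
    rw [burgersSwirl, einIntegrand_of_ne hκr, show -(c * r ^ 2) / (4 * ν) = -(c / (4 * ν) * r ^ 2)
      by ring]
    field_simp

lemma two_pi_mul_integral_cube_mul_burgersSwirl_sq (Γ κ R : ℝ) :
    2 * π * ∫ r in 0..R, r ^ 3 * burgersSwirl Γ κ r ^ 2
      = Γ ^ 2 / (4 * π) * (2 * ein (κ * R ^ 2) - ein (2 * (κ * R ^ 2))) := by
  have hintegrand : ∀ r, r ^ 3 * burgersSwirl Γ κ r ^ 2 = Γ ^ 2 / (4 * π ^ 2) *
      (2 * κ * r * einIntegrand (κ * r ^ 2)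
        - 2 * (2 * κ) * r * einIntegrand (2 * κ * r ^ 2) / 2) := fun r => by
    have h := einIntegrand_sq_mul_self (κ * r ^ 2)
    rw [← mul_assoc 2 κ] at h
    unfold burgersSwirl
    linear_combination (Γ ^ 2 / (4 * π ^ 2) * κ * r) * h
  simp_rw [hintegrand]
  rw [intervalIntegral.integral_const_mul, intervalIntegral.integral_sub
      (Continuous.intervalIntegrable (by fun_prop) _ _)
      (Continuous.intervalIntegrable (by fun_prop) _ _),
    intervalIntegral.integral_div, integral_mul_einIntegrand_mul_sq, integral_mul_einIntegrand_mul_sq, mul_assoc 2 κ]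
  field_simp

end BurgersVortex

open BurgersVortex in
/-- Let `a, b, d, Γ ∈ ℝ` with `c = a + b > 0` and `R > 0`.  For `ν > 0`
let `g_ν(r) = Γ(1 − e^{−cr²/(4ν)})/(2πr²)` (extended by its limit `Γc/(8πν)` at `r = 0`)
and `v_ν(x,y) = (−ax − g_ν(r)y, −by + g_ν(r)x, d)` with `r = √(x² + y²)`.  Then the
regularized core energy has the finite inviscid limit
`lim_{ν→0⁺} [ ½∫_{x²+y²≤R²} |v_ν|² − (Γ²/(8π))(γ_EM + log(cR²/(8ν))) ]
  = πR²d²/2 + πR⁴(a² + b²)/8`,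
so the core kinetic energy diverges logarithmically as `ν → 0⁺` with coefficient
`Γ²/(8π)`. -/
theorem statement16
    (a b d Γ R : ℝ) (hc : 0 < a + b) (hR : 0 < R)
    (g : ℝ → ℝ → ℝ)
    (hg : ∀ ν r : ℝ, g ν r =
      if r = 0 then Γ * (a + b) / (8 * Real.pi * ν)
      else Γ * (1 - Real.exp (-((a + b) * r ^ 2) / (4 * ν))) / (2 * Real.pi * r ^ 2))
    (v : ℝ → ℝ × ℝ → E3)
    (hv : ∀ ν : ℝ, ∀ x : ℝ × ℝ, v ν x =
      mk3 (-(a * x.1) - g ν (Real.sqrt (x.1 ^ 2 + x.2 ^ 2)) * x.2)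
          (-(b * x.2) + g ν (Real.sqrt (x.1 ^ 2 + x.2 ^ 2)) * x.1)
          d) :
    Filter.Tendsto
      (fun ν : ℝ =>
        (1 / 2) * (∫ x in {x : ℝ × ℝ | x.1 ^ 2 + x.2 ^ 2 ≤ R ^ 2}, ‖v ν x‖ ^ 2) -
          Γ ^ 2 / (8 * Real.pi) *
            (Real.eulerMascheroniConstant + Real.log ((a + b) * R ^ 2 / (8 * ν))))
      (𝓝[>] (0:ℝ))
      (𝓝 (Real.pi * R ^ 2 * d ^ 2 / 2 + Real.pi * R ^ 4 * (a ^ 2 + b ^ 2) / 8)) := by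
  set L := Real.pi * R ^ 2 * d ^ 2 / 2 + Real.pi * R ^ 4 * (a ^ 2 + b ^ 2) / 8
  set T : ℝ → ℝ := fun ν => (a + b) / (4 * ν) * R ^ 2
  have hT : Tendsto T (𝓝[>] 0) atTop := by
    refine (tendsto_inv_nhdsGT_zero.const_mul_atTop
      (by positivity : 0 < (a + b) * R ^ 2 / 4)).congr fun ν => ?_
    simp only [T]
    ring
  have hlim := ((tendsto_two_mul_ein_sub_ein_two_mul_sub_log.comp hT).sub_const
    Real.eulerMascheroniConstant).const_mul (Γ ^ 2 / (8 * Real.pi)) |>.const_add L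
  rw [sub_self, mul_zero, add_zero] at hlim
  refine hlim.congr' ?_
  filter_upwards [self_mem_nhdsWithin] with ν (hν : 0 < ν)
  have hvel : v ν = strainedVortexVelocity a b d (burgersSwirl Γ ((a + b) / (4 * ν))) := by
    funext x
    simp only [hv, strainedVortexVelocity, hg, burgersSwirl_eq_ite Γ hc.ne' hν.ne']
  rw [hvel, integral_disk_norm_strainedVortexVelocity_sq a b d (by fun_prop) hR.le,
    two_pi_mul_integral_cube_mul_burgersSwirl_sq,
    show (a + b) * R ^ 2 / (8 * ν) = T ν / 2 by simp only [T]; field_simp; ring]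
  simp only [Function.comp_apply, T]
  ring
end
end

section
/- Let β, γ, a, b, c ∈ ℝ with 2γ + 1 ≠ 0, and define real numbers p, q by p + iq = (b − a)/2 + c e^{−2iβ}/(2(2γ + 1)). Define the curve C : (0, π/2) → ℂ by C(θ) = e^{iβ} (1 + i tan θ) (tan θ)^γ, where (tan θ)^γ is the real power of the positive number tan θ. Then C satisfies the shape equation of the stable cylindrical vortex sheet: Im[ ( (2p + a − b + 2iq) C(θ) − c · conj(C(θ)) ) · C'(θ) ] = 0 for every θ ∈ (0, π/2). -/
noncomputable section

open MeasureTheory Filter Set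
open scoped RealInnerProductSpace Topology

/-- Let `β, γ, a, b, c ∈ ℝ` with `2γ + 1 ≠ 0`, define `p, q ∈ ℝ` by
`p + iq = (b − a)/2 + c e^{−2iβ}/(2(2γ + 1))`, and let
`C(θ) = e^{iβ}(1 + i tan θ)(tan θ)^γ` on `(0, π/2)`.  Then `C` satisfies the shape
equation of the stable cylindrical vortex sheet:
`Im[((2p + a − b + 2iq)·C(θ) − c·conj(C(θ)))·C'(θ)] = 0` for all `θ ∈ (0, π/2)`. -/
theorem statement19
    (β γ a b c p q : ℝ) (hγ : 2 * γ + 1 ≠ 0)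
    (hpq : (p : ℂ) + q * Complex.I =
      ((b : ℂ) - a) / 2 + c * Complex.exp (-2 * β * Complex.I) / (2 * (2 * γ + 1)))
    (C : ℝ → ℂ)
    (hC : ∀ θ : ℝ, C θ =
      Complex.exp (β * Complex.I) * (1 + Complex.I * Real.tan θ) *
        ((Real.tan θ ^ γ : ℝ) : ℂ)) :
    ∀ θ ∈ Set.Ioo (0:ℝ) (Real.pi / 2),
      (((((2 * p + a - b : ℝ) : ℂ) + 2 * q * Complex.I) * C θ -
          c * (starRingEnd ℂ) (C θ)) * deriv C θ).im = 0 := by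
  intro θ hθ
  obtain ⟨hθ0, hθ1⟩ := hθ
  have hcos : 0 < Real.cos θ := Real.cos_pos_of_mem_Ioo
    ⟨by linarith [Real.pi_pos], hθ1⟩
  have hcos' : Real.cos θ ≠ 0 := ne_of_gt hcos
  have ht : 0 < Real.tan θ := Real.tan_pos_of_pos_of_lt_pi_div_two hθ0 hθ1
  set t : ℝ := Real.tan θ with htdef
  set u' : ℝ := 1 / Real.cos θ ^ 2 with hu'
  set s : ℝ := t ^ (γ - 1) with hs
  set r : ℝ := t ^ γ with hrdef
  have hrs : r = t * s := by
    have h : t ^ ((1:ℝ) + (γ - 1)) = t ^ (1:ℝ) * t ^ (γ - 1) := Real.rpow_add ht 1 (γ - 1)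
    rw [show (1:ℝ) + (γ - 1) = γ by ring, Real.rpow_one] at h
    rw [hrdef, hs, h]
  set K : ℂ := Complex.exp (β * Complex.I) with hKdef
  have hK : K ≠ 0 := Complex.exp_ne_zero _
  have hconjK : (starRingEnd ℂ) K = K⁻¹ := by
    rw [hKdef, ← Complex.exp_conj, ← Complex.exp_neg]
    congr 1
    simp [Complex.conj_I]
  have hexp2 : Complex.exp (-2 * β * Complex.I) = K⁻¹ * K⁻¹ := by
    rw [show (-2 * β * Complex.I : ℂ) = -(β * Complex.I) + -(β * Complex.I) by ring,
      Complex.exp_add, Complex.exp_neg, hKdef]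
  have hγC : (2 * (γ : ℂ) + 1) ≠ 0 := by
    intro h
    apply hγ
    have := congrArg Complex.re h
    push_cast at this
    simpa using this
  have hA : (((2 * p + a - b : ℝ) : ℂ) + 2 * q * Complex.I)
      = c * (K⁻¹ * K⁻¹) / (2 * γ + 1) := by
    have hpq' : (p : ℂ) + q * Complex.I =
        ((b : ℂ) - a) / 2 + c * Complex.exp (-2 * β * Complex.I) / (2 * γ + 1) / 2 := by
      rw [hpq, div_div, mul_comm ((2:ℂ) * γ + 1) 2]
    rw [← hexp2]
    push_cast
    linear_combination 2 * hpq' 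
  -- derivative of C
  have htan : HasDerivAt Real.tan u' θ := Real.hasDerivAt_tan hcos'
  have htanC : HasDerivAt (fun x => (Real.tan x : ℂ)) (u' : ℂ) θ := htan.ofReal_comp
  have hf1 : HasDerivAt (fun x => (1 : ℂ) + Complex.I * Real.tan x)
      (Complex.I * u') θ := by
    simpa using (htanC.const_mul Complex.I).const_add 1
  have hrpow : HasDerivAt (fun x => Real.tan x ^ γ) (γ * s * u') θ := by
    have := htan.rpow_const (p := γ) (Or.inl (ne_of_gt ht))
    simpa [hs, mul_comm, mul_assoc, mul_left_comm] using this
  have hf2 : HasDerivAt (fun x => ((Real.tan x ^ γ : ℝ) : ℂ))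
      ((γ * s * u' : ℝ) : ℂ) θ := hrpow.ofReal_comp
  have hCeq : C = fun x => K * ((1 + Complex.I * Real.tan x) *
      ((Real.tan x ^ γ : ℝ) : ℂ)) := by
    funext x
    rw [hC x, hKdef]
    ring
  have hC' : HasDerivAt C
      (K * ((Complex.I * u') * ((Real.tan θ ^ γ : ℝ) : ℂ)
        + (1 + Complex.I * Real.tan θ) * ((γ * s * u' : ℝ) : ℂ))) θ := by
    rw [hCeq]
    exact (hf1.mul hf2).const_mul K
  have hderiv : deriv C θ
      = K * ((Complex.I * u') * (r : ℂ)
        + (1 + Complex.I * (t : ℂ)) * ((γ * s * u' : ℝ) : ℂ)) := hC'.deriv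
  have hconjC : (starRingEnd ℂ) (C θ)
      = K⁻¹ * (1 - Complex.I * (t : ℂ)) * (r : ℂ) := by
    rw [hC θ]
    simp only [map_mul, map_add, map_one, Complex.conj_ofReal, Complex.conj_I, hconjK,
      ← hKdef]
    push_cast [← htdef, ← hrdef]
    ring
  have key : ((((2 * p + a - b : ℝ) : ℂ) + 2 * q * Complex.I) * C θ -
        c * (starRingEnd ℂ) (C θ)) * deriv C θ
      = ((2 * c * r * s * u' / (2 * γ + 1) : ℝ) : ℂ) *
        ((-(γ : ℂ) + Complex.I * ((γ : ℂ) + 1) * (t : ℂ)) *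
          ((γ : ℂ) + Complex.I * ((γ : ℂ) + 1) * (t : ℂ))) := by
    rw [hderiv, hconjC, hA, hC θ]
    simp only [← htdef, ← hrdef]
    rw [hrs]
    push_cast
    field_simp
    ring
  have hZ : ((-(γ : ℂ) + Complex.I * ((γ : ℂ) + 1) * (t : ℂ)) *
        ((γ : ℂ) + Complex.I * ((γ : ℂ) + 1) * (t : ℂ)))
      = ((-(γ ^ 2 + (γ + 1) ^ 2 * t ^ 2) : ℝ) : ℂ) := by
    push_cast
    linear_combination ((γ : ℂ) + 1) ^ 2 * (t : ℂ) ^ 2 * Complex.I_sq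
  rw [key, hZ, ← Complex.ofReal_mul]
  exact Complex.ofReal_im _
end
end
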